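/- arXiv:2005.11639 — 8 statements merged into one kernel-verified Lean document; each statement's English description precedes it below -/
import Mathlib

section
/- Let N = [[I_n, 0, 0],[n₁ᵀ, I_r, 0],[n₂ᵀ, -n₁, I_n]] be a block lower unitriangular matrix with n₁ ∈ M_{n,r}(ℝ), n₂ ∈ M_n(ℝ), and let J = [[0,0,I_n],[0,I_r,0],[I_n,0,0]]. Then N satisfies J N J = (Nᵀ)⁻¹ if and only if n₂ + n₂ᵀ = -n₁ n₁ᵀ. -/
/-!
Since `det N = 1`, the condition `J N J = (Nᵀ)⁻¹` says `Nᵀ (J N J) = 1`. Conjugating by `J`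
reverses the block order, so `J N J = [[I, -n₁, n₂ᵀ], [0, I, n₁ᵀ], [0, 0, I]]`, and `Nᵀ (J N J)`
is the identity except for its corner block `n₂ + n₂ᵀ + n₁ n₁ᵀ`.
-/

open Matrix

namespace Matrix

theorem fromCols_add_fromCols {m n₁ n₂ α : Type*} [Add α] (A₁ B₁ : Matrix m n₁ α)
    (A₂ B₂ : Matrix m n₂ α) : fromCols A₁ A₂ + fromCols B₁ B₂ = fromCols (A₁ + B₁) (A₂ + B₂) := by
  ext i (j | j) <;> rfl

theorem fromRows_add_fromRows {m₁ m₂ n α : Type*} [Add α] (A₁ B₁ : Matrix m₁ n α)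
    (A₂ B₂ : Matrix m₂ n α) : fromRows A₁ A₂ + fromRows B₁ B₂ = fromRows (A₁ + B₁) (A₂ + B₂) := by
  ext (i | i) j <;> rfl

theorem eq_nonsing_inv_iff_mul_eq_one {n α : Type*} [Fintype n] [DecidableEq n] [CommRing α]
    {A B : Matrix n n α} (hA : IsUnit A.det) : B = A⁻¹ ↔ A * B = 1 :=
  ⟨fun h => h ▸ mul_nonsing_inv A hA, fun h => (inv_eq_right_inv h).symm⟩

end Matrix

section SplitForm

variable {l m R : Type*} [Fintype l] [Fintype m] [DecidableEq l] [DecidableEq m] [CommRing R]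

def splitForm (l m R : Type*) [DecidableEq l] [DecidableEq m] [Zero R] [One R] :
    Matrix (l ⊕ (m ⊕ l)) (l ⊕ (m ⊕ l)) R :=
  fromBlocks 0 (fromCols 0 1) (fromRows 0 1) (fromBlocks 1 0 0 0)

def lowerUnitriangular (n₁ : Matrix l m R) (n₂ : Matrix l l R) :
    Matrix (l ⊕ (m ⊕ l)) (l ⊕ (m ⊕ l)) R :=
  fromBlocks 1 0 (fromRows n₁ᵀ n₂ᵀ) (fromBlocks 1 0 (-n₁) 1)

theorem det_lowerUnitriangular (n₁ : Matrix l m R) (n₂ : Matrix l l R) :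
    (lowerUnitriangular n₁ n₂).det = 1 := by
  simp [lowerUnitriangular, det_fromBlocks_zero₁₂]

theorem splitForm_mul_lowerUnitriangular_mul_splitForm (n₁ : Matrix l m R) (n₂ : Matrix l l R) :
    splitForm l m R * lowerUnitriangular n₁ n₂ * splitForm l m R =
      fromBlocks 1 (fromCols (-n₁) n₂ᵀ) 0 (fromBlocks 1 n₁ᵀ 0 1) := by
  simp [splitForm, lowerUnitriangular, fromBlocks_multiply, fromCols_mul_fromRows,
    fromCols_mul_fromBlocks, fromBlocks_mul_fromRows, mul_fromCols, fromCols_add_fromCols,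
    fromRows_add_fromRows]
  ext (i | i) (j | j) <;> simp [one_apply]

theorem transpose_lowerUnitriangular_mul_conj_splitForm (n₁ : Matrix l m R)
    (n₂ : Matrix l l R) :
    (lowerUnitriangular n₁ n₂)ᵀ *
        (splitForm l m R * lowerUnitriangular n₁ n₂ * splitForm l m R) =
      fromBlocks 1 (fromCols 0 (n₂ + n₂ᵀ + n₁ * n₁ᵀ)) 0 1 := by
  rw [splitForm_mul_lowerUnitriangular_mul_splitForm]
  simp [lowerUnitriangular, fromBlocks_transpose, transpose_fromRows, fromBlocks_multiply,
    fromCols_mul_fromBlocks, fromCols_add_fromCols]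
  congr 1
  abel

theorem conj_splitForm_lowerUnitriangular_eq_transpose_inv_iff (n₁ : Matrix l m R)
    (n₂ : Matrix l l R) :
    splitForm l m R * lowerUnitriangular n₁ n₂ * splitForm l m R =
        (lowerUnitriangular n₁ n₂)ᵀ⁻¹ ↔ n₂ + n₂ᵀ = -(n₁ * n₁ᵀ) := by
  have hdet : IsUnit (lowerUnitriangular n₁ n₂)ᵀ.det := by
    simp [det_lowerUnitriangular]
  rw [eq_nonsing_inv_iff_mul_eq_one hdet, transpose_lowerUnitriangular_mul_conj_splitForm,
    ← fromBlocks_one (l := l) (m := m ⊕ l), fromBlocks_inj, ← fromCols_zero, fromCols_ext_iff, eq_neg_iff_add_eq_zero]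
  simp

end SplitForm

/-- The block lower unitriangular matrix
`N = [[I,0,0],[n₁ᵀ,I,0],[n₂ᵀ,-n₁,I]]` satisfies `J N J = (Nᵀ)⁻¹`
(with `J = [[0,0,I_n],[0,I_r,0],[I_n,0,0]]`) iff `n₂ + n₂ᵀ = -n₁ n₁ᵀ`. -/
theorem stmt3 (n r : ℕ)
    (n₁ : Matrix (Fin n) (Fin r) ℝ) (n₂ : Matrix (Fin n) (Fin n) ℝ)
    (J N : Matrix (Fin n ⊕ (Fin r ⊕ Fin n)) (Fin n ⊕ (Fin r ⊕ Fin n)) ℝ)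
    (hJ : J = Matrix.fromBlocks 0 (Matrix.fromCols 0 1) (Matrix.fromRows 0 1)
      (Matrix.fromBlocks 1 0 0 0))
    (hN : N = Matrix.fromBlocks 1 0 (Matrix.fromRows n₁ᵀ n₂ᵀ)
      (Matrix.fromBlocks 1 0 (-n₁) 1)) :
    J * N * J = (Nᵀ)⁻¹ ↔ n₂ + n₂ᵀ = -(n₁ * n₁ᵀ) := by
  subst hJ hN
  exact conj_splitForm_lowerUnitriangular_eq_transpose_inv_iff n₁ n₂
end

section
/- Let J = [[0,0,I_n],[0,I_r,0],[I_n,0,0]] and let G be a real symmetric positive definite (2n+r)×(2n+r) matrix with JGJ = G⁻¹. Then there exist a unique h ∈ Sym⁺_n(ℝ), n₁ ∈ M_{n,r}(ℝ), and n₂ ∈ M_n(ℝ) with n₂ + n₂ᵀ = -n₁n₁ᵀ such that G = N A Nᵀ, where N = [[I_n,0,0],[n₁ᵀ,I_r,0],[n₂ᵀ,-n₁,I_n]] and A = diag(h, I_r, h⁻¹). -/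
/-!
Since `J² = 1`, the hypothesis says `G J G = J`. Write `G` in symmetric block form with first
block row `(a, a n₁, a n₂)`, `a` positive definite. The block equations of `G J G = J` give
`n₂ + n₂ᵀ = -n₁ n₁ᵀ` and show that the Schur complement `σ = d - n₁ᵀ a n₁` satisfies `σ² = 1`;
as `σ` is positive semidefinite, `σ = 1`, and then the remaining blocks of `G` are exactly those
of `N A Nᵀ` with `h = a`. Uniqueness holds because `N A Nᵀ` has first block row `(h, h n₁, h n₂)`.
-/

open Matrix

namespace Matrix

variable {R m k : Type*}

/-- The block matrix `[[a, b, c], [bᵀ, d, e], [cᵀ, eᵀ, f]]`. -/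
def symBlocks (a : Matrix m m R) (b : Matrix m k R) (c : Matrix m m R) (d : Matrix k k R)
    (e : Matrix k m R) (f : Matrix m m R) : Matrix (m ⊕ (k ⊕ m)) (m ⊕ (k ⊕ m)) R :=
  fromBlocks a (fromCols b c) (fromRows bᵀ cᵀ) (fromBlocks d e eᵀ f)

section symBlocks

variable {a a' c c' f f' : Matrix m m R} {b b' : Matrix m k R} {d d' : Matrix k k R}
  {e e' : Matrix k m R}

theorem symBlocks_inj :
    symBlocks a b c d e f = symBlocks a' b' c' d' e' f' ↔
      a = a' ∧ b = b' ∧ c = c' ∧ d = d' ∧ e = e' ∧ f = f' := by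
  constructor
  · intro h
    obtain ⟨ha, hbc, -, hdef⟩ := fromBlocks_inj.mp h
    obtain ⟨hb, hc⟩ := fromCols_inj hbc
    obtain ⟨hd, he, -, hf⟩ := fromBlocks_inj.mp hdef
    exact ⟨ha, hb, hc, hd, he, hf⟩
  · rintro ⟨rfl, rfl, rfl, rfl, rfl, rfl⟩
    rfl

theorem symBlocks_transpose : (symBlocks a b c d e f)ᵀ = symBlocks aᵀ b c dᵀ e fᵀ := by
  simp [symBlocks, fromBlocks_transpose, transpose_fromCols, transpose_fromRows]

theorem exists_eq_symBlocks_of_transpose_eq {G : Matrix (m ⊕ (k ⊕ m)) (m ⊕ (k ⊕ m)) R}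
    (hG : Gᵀ = G) : ∃ a b c d e f, G = symBlocks a b c d e f := by
  refine ⟨G.toBlocks₁₁, G.toBlocks₁₂.toCols₁, G.toBlocks₁₂.toCols₂, G.toBlocks₂₂.toBlocks₁₁,
    G.toBlocks₂₂.toBlocks₁₂, G.toBlocks₂₂.toBlocks₂₂, ?_⟩
  ext (i | i | i) (j | j | j) <;>
    simp [symBlocks, toBlocks₁₁, toBlocks₁₂, toBlocks₂₂, toCols₁, toCols₂] <;>
    exact congrFun (congrFun hG.symm _) _

theorem symBlocks_submatrix_sumMap_inl :
    (symBlocks a b c d e f).submatrix (Sum.map id Sum.inl) (Sum.map id Sum.inl) =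
      fromBlocks a b bᵀ d := by
  ext (i | i) (j | j) <;> rfl

theorem symBlocks_mul_mul_symBlocks [Fintype m] [Fintype k] [DecidableEq m] [DecidableEq k]
    [CommRing R] :
    symBlocks a b c d e f * fromBlocks 0 (fromCols 0 1) (fromRows 0 1) (fromBlocks 1 0 0 0) *
        symBlocks a b c d e f =
      fromBlocks (a * cᵀ + b * bᵀ + c * a)
        (fromCols (a * eᵀ + b * d + c * b) (a * f + b * e + c * c))
        (fromRows (bᵀ * cᵀ + d * bᵀ + e * a) (cᵀ * cᵀ + eᵀ * bᵀ + f * a))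
        (fromBlocks (bᵀ * eᵀ + d * d + e * b) (bᵀ * f + d * e + e * c)
          (cᵀ * eᵀ + eᵀ * d + f * b) (cᵀ * f + eᵀ * e + f * c)) := by
  ext (i | i | i) (j | j | j) <;>
    simp [symBlocks, mul_apply, Fintype.sum_sum_type, one_apply] <;> ring

end symBlocks

section Algebra

variable [Fintype m] [Fintype k] [CommRing R]

theorem fromBlocks_antidiag_mul_self [DecidableEq m] [DecidableEq k] :
    fromBlocks 0 (fromCols 0 1) (fromRows 0 1) (fromBlocks 1 0 0 0) *
        fromBlocks 0 (fromCols 0 1) (fromRows 0 1) (fromBlocks 1 0 0 0) =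
      (1 : Matrix (m ⊕ (k ⊕ m)) (m ⊕ (k ⊕ m)) R) := by
  ext (i | i | i) (j | j | j) <;> simp [mul_apply, Fintype.sum_sum_type, one_apply]

theorem mul_mul_eq_of_mul_mul_eq_nonsing_inv [DecidableEq m] {J G : Matrix m m R} (hJ : J * J = 1)
    (hG : IsUnit G.det) (h : J * G * J = G⁻¹) : G * J * G = J := by
  have hJGJG : J * G * J * G = 1 := by rw [h, nonsing_inv_mul _ hG]
  calc G * J * G = J * J * G * J * G := by rw [hJ, Matrix.one_mul]
    _ = J * (J * G * J * G) := by simp only [Matrix.mul_assoc]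
    _ = J := by rw [hJGJG, Matrix.mul_one]

theorem fromBlocks_mul_fromBlocks_mul_transpose_eq_symBlocks [DecidableEq m] [DecidableEq k]
    {h : Matrix m m R} (hh : hᵀ = h) (n₁ : Matrix m k R) (n₂ : Matrix m m R) :
    fromBlocks 1 0 (fromRows n₁ᵀ n₂ᵀ) (fromBlocks 1 0 (-n₁) 1) *
        fromBlocks h 0 0 (fromBlocks 1 0 0 h⁻¹) *
        (fromBlocks 1 0 (fromRows n₁ᵀ n₂ᵀ) (fromBlocks 1 0 (-n₁) 1))ᵀ =
      symBlocks h (h * n₁) (h * n₂) (n₁ᵀ * h * n₁ + 1) (n₁ᵀ * h * n₂ - n₁ᵀ)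
        (n₂ᵀ * h * n₂ + n₁ * n₁ᵀ + h⁻¹) := by
  simp [symBlocks, fromBlocks_transpose, transpose_fromRows, fromBlocks_multiply, fromRows_mul,
    mul_fromCols, fromCols_fromRows_eq_fromBlocks, fromBlocks_add, sub_eq_add_neg, hh,
    Matrix.mul_assoc, add_assoc]

variable {a : Matrix m m R} {n₁ : Matrix m k R} {n₂ : Matrix m m R} {d : Matrix k k R}
  {e : Matrix k m R}

theorem add_transpose_eq_neg_mul_transpose [DecidableEq m] [Invertible a] (ha : aᵀ = a)
    (h : a * (a * n₂)ᵀ + a * n₁ * (a * n₁)ᵀ + a * n₂ * a = 0) :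
    n₂ + n₂ᵀ = -(n₁ * n₁ᵀ) := by
  have hconj : a * (n₂ + n₂ᵀ + n₁ * n₁ᵀ) * a = 0 := by
    rw [← h]
    simp only [transpose_mul, ha, Matrix.mul_add, Matrix.add_mul, Matrix.mul_assoc]
    abel
  have hsum : n₂ + n₂ᵀ + n₁ * n₁ᵀ = 0 := by
    simpa [Matrix.mul_assoc] using congrArg (fun X => ⅟a * X * ⅟a) hconj
  exact eq_neg_of_add_eq_zero_left hsum

theorem transpose_eq_of_mul_add_eq_zero [DecidableEq m] [Invertible a]
    (h : a * eᵀ + a * n₁ * d + a * n₂ * (a * n₁) = 0) :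
    eᵀ = -(n₁ * d + n₂ * a * n₁) := by
  have hfactor : a * (eᵀ + (n₁ * d + n₂ * a * n₁)) = 0 := by
    rw [← h]; simp only [Matrix.mul_add, Matrix.mul_assoc]; abel
  exact eq_neg_of_add_eq_zero_left (by simpa using congrArg (⅟a * ·) hfactor)

theorem schur_mul_self_eq_one [DecidableEq k] (ha : aᵀ = a) (hd : dᵀ = d)
    (hn₂ : n₂ + n₂ᵀ = -(n₁ * n₁ᵀ)) (he : eᵀ = -(n₁ * d + n₂ * a * n₁))
    (h : (a * n₁)ᵀ * eᵀ + d * d + e * (a * n₁) = 1) :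
    (d - n₁ᵀ * a * n₁) * (d - n₁ᵀ * a * n₁) = 1 := by
  have he' : e = -(d * n₁ᵀ + n₁ᵀ * a * n₂ᵀ) := by
    rw [← transpose_transpose e, he]
    simp [transpose_mul, ha, hd, Matrix.mul_assoc]
  have hn₂' : n₂ᵀ = -(n₁ * n₁ᵀ) - n₂ := by rw [← hn₂]; abel
  rw [← h, he, he', hn₂']
  simp only [transpose_mul, ha, Matrix.mul_add, Matrix.add_mul, Matrix.mul_sub, Matrix.sub_mul,
    Matrix.mul_neg, Matrix.neg_mul, Matrix.mul_assoc]
  abel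

theorem eq_transpose_mul_sub_of_eq_add_one [DecidableEq k] (ha : aᵀ = a)
    (hn₂ : n₂ + n₂ᵀ = -(n₁ * n₁ᵀ)) (he : eᵀ = -(n₁ * d + n₂ * a * n₁))
    (hd : d = n₁ᵀ * a * n₁ + 1) : e = n₁ᵀ * a * n₂ - n₁ᵀ := by
  have hn₂' : n₂ᵀ = -(n₁ * n₁ᵀ) - n₂ := by rw [← hn₂]; abel
  rw [← transpose_transpose e, he, hd]
  simp only [transpose_neg, transpose_add, transpose_mul, transpose_transpose, ha, hn₂',
    Matrix.mul_add, Matrix.mul_sub, Matrix.mul_neg, Matrix.mul_one, Matrix.mul_assoc]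
  abel

theorem eq_transpose_mul_add_of_mul_add_eq_one [DecidableEq m] [Invertible a]
    {f : Matrix m m R} (hn₂ : n₂ + n₂ᵀ = -(n₁ * n₁ᵀ)) (he : e = n₁ᵀ * a * n₂ - n₁ᵀ)
    (h : a * f + a * n₁ * e + a * n₂ * (a * n₂) = 1) :
    f = n₂ᵀ * a * n₂ + n₁ * n₁ᵀ + a⁻¹ := by
  have hn₂' : n₂ᵀ = -(n₁ * n₁ᵀ) - n₂ := by rw [← hn₂]; abel
  have hf : f = ⅟a - n₁ * e - n₂ * a * n₂ := by
    have h' := congrArg (⅟a * ·) h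
    simp only [Matrix.mul_add, ← Matrix.mul_assoc, invOf_mul_self, Matrix.one_mul,
      Matrix.mul_one] at h'
    rw [← h']; simp only [Matrix.mul_assoc]; abel
  rw [hf, he, hn₂', invOf_eq_nonsing_inv]
  simp only [Matrix.mul_sub, Matrix.sub_mul, Matrix.neg_mul, Matrix.mul_assoc]
  abel

end Algebra

section Positivity

variable {a c f : Matrix m m ℝ} {d : Matrix k k ℝ} {e : Matrix k m ℝ}

theorem PosDef.of_symBlocks {b : Matrix m k ℝ} (hG : (symBlocks a b c d e f).PosDef) :
    a.PosDef :=
  hG.submatrix Sum.inl_injective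

variable [Fintype m] [Fintype k] [DecidableEq m]

theorem posSemidef_sub_of_posDef_symBlocks {n₁ : Matrix m k ℝ}
    (hG : (symBlocks a (a * n₁) c d e f).PosDef) : (d - n₁ᵀ * a * n₁).PosSemidef := by
  have ha := hG.of_symBlocks
  have : Invertible a := ha.isUnit.invertible
  have hsub := hG.posSemidef.submatrix (Sum.map id Sum.inl)
  rw [symBlocks_submatrix_sumMap_inl, ← conjTranspose_eq_transpose_of_trivial,
    PosDef.fromBlocks₁₁ _ _ ha] at hsub
  have hT : aᵀ = a := by simpa [conjTranspose_eq_transpose_of_trivial] using ha.isHermitian.eq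
  simpa [conjTranspose_eq_transpose_of_trivial, transpose_mul, hT, Matrix.mul_assoc] using hsub

theorem PosSemidef.eq_one_of_mul_self_eq_one [DecidableEq k] {s : Matrix k k ℝ} (hs : s.PosSemidef)
    (h : s * s = 1) : s = 1 := by
  open scoped MatrixOrder in
  exact (CFC.mul_self_eq_mul_self_iff s 1 hs.nonneg PosSemidef.one.nonneg).mp
    (by rw [h, Matrix.mul_one])

end Positivity

end Matrix

theorem stmt4_general (n r : ℕ)
    (J G : Matrix (Fin n ⊕ (Fin r ⊕ Fin n)) (Fin n ⊕ (Fin r ⊕ Fin n)) ℝ)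
    (hJ : J = Matrix.fromBlocks 0 (Matrix.fromCols 0 1) (Matrix.fromRows 0 1)
      (Matrix.fromBlocks 1 0 0 0))
    (hG : G.PosDef) (hGJ : J * G * J = G⁻¹) :
    ∃! p : Matrix (Fin n) (Fin n) ℝ × Matrix (Fin n) (Fin r) ℝ × Matrix (Fin n) (Fin n) ℝ,
      p.1.PosDef ∧ p.1ᵀ = p.1 ∧ p.2.2 + p.2.2ᵀ = -(p.2.1 * p.2.1ᵀ) ∧
      G = (Matrix.fromBlocks 1 0 (Matrix.fromRows p.2.1ᵀ p.2.2ᵀ)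
            (Matrix.fromBlocks 1 0 (-p.2.1) 1)) *
          (Matrix.fromBlocks p.1 0 0 (Matrix.fromBlocks 1 0 0 p.1⁻¹)) *
          (Matrix.fromBlocks 1 0 (Matrix.fromRows p.2.1ᵀ p.2.2ᵀ)
            (Matrix.fromBlocks 1 0 (-p.2.1) 1))ᵀ := by
  have hGJG := mul_mul_eq_of_mul_mul_eq_nonsing_inv (hJ ▸ fromBlocks_antidiag_mul_self)
    ((isUnit_iff_isUnit_det G).mp hG.isUnit) hGJ
  have hGsymm : Gᵀ = G := by simpa [conjTranspose_eq_transpose_of_trivial] using hG.isHermitian.eq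
  obtain ⟨a, b, c, d, e, f, rfl⟩ := exists_eq_symBlocks_of_transpose_eq hGsymm
  obtain ⟨ha, -, -, hd, -, -⟩ := symBlocks_inj.mp (symBlocks_transpose.symm.trans hGsymm)
  have haPD := hG.of_symBlocks
  have : Invertible a := haPD.isUnit.invertible
  obtain ⟨n₁, rfl⟩ : ∃ n₁, b = a * n₁ := ⟨⅟a * b, by simp⟩
  obtain ⟨n₂, rfl⟩ : ∃ n₂, c = a * n₂ := ⟨⅟a * c, by simp⟩
  rw [hJ, symBlocks_mul_mul_symBlocks] at hGJG
  obtain ⟨h11, h1, -, h2⟩ := fromBlocks_inj.mp hGJG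
  obtain ⟨h12, h13⟩ := fromCols_inj h1
  obtain ⟨h22, -, -, -⟩ := fromBlocks_inj.mp h2
  have hn₂ := add_transpose_eq_neg_mul_transpose ha h11
  have heT := transpose_eq_of_mul_add_eq_zero h12
  have hschur := (posSemidef_sub_of_posDef_symBlocks hG).eq_one_of_mul_self_eq_one
    (schur_mul_self_eq_one ha hd hn₂ heT h22)
  have hd' : d = n₁ᵀ * a * n₁ + 1 := sub_eq_iff_eq_add'.mp hschur
  have he := eq_transpose_mul_sub_of_eq_add_one ha hn₂ heT hd'
  refine ⟨(a, n₁, n₂), ⟨haPD, ha, hn₂, ?_⟩, ?_⟩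
  · rw [fromBlocks_mul_fromBlocks_mul_transpose_eq_symBlocks ha, ← hd', ← he,
      ← eq_transpose_mul_add_of_mul_add_eq_one hn₂ he h13]
  · rintro ⟨h, m₁, m₂⟩ ⟨-, hh, -, hEq⟩
    rw [fromBlocks_mul_fromBlocks_mul_transpose_eq_symBlocks hh, symBlocks_inj] at hEq
    obtain ⟨rfl, h₁, h₂, -⟩ := hEq
    obtain rfl : n₁ = m₁ := by simpa using congrArg (⅟a * ·) h₁
    obtain rfl : n₂ = m₂ := by simpa using congrArg (⅟a * ·) h₂
    rfl

/-- block-Gauss decomposition for `Ω(J)`: every symmetric positive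
definite `G` with `JGJ = G⁻¹` decomposes uniquely as `G = N A Nᵀ` with
`N = [[I,0,0],[n₁ᵀ,I,0],[n₂ᵀ,-n₁,I]]`, `n₂ + n₂ᵀ = -n₁n₁ᵀ`, and `A = diag(h, I, h⁻¹)`
with `h` symmetric positive definite. -/
theorem stmt4 (n r : ℕ)
    (J G : Matrix (Fin n ⊕ (Fin r ⊕ Fin n)) (Fin n ⊕ (Fin r ⊕ Fin n)) ℝ)
    (hJ : J = Matrix.fromBlocks 0 (Matrix.fromCols 0 1) (Matrix.fromRows 0 1)
      (Matrix.fromBlocks 1 0 0 0))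
    (hG : G.PosDef) (hGsymm : Gᵀ = G) (hGJ : J * G * J = G⁻¹) :
    ∃! p : Matrix (Fin n) (Fin n) ℝ × Matrix (Fin n) (Fin r) ℝ × Matrix (Fin n) (Fin n) ℝ,
      p.1.PosDef ∧ p.1ᵀ = p.1 ∧ p.2.2 + p.2.2ᵀ = -(p.2.1 * p.2.1ᵀ) ∧
      G = (Matrix.fromBlocks 1 0 (Matrix.fromRows p.2.1ᵀ p.2.2ᵀ)
            (Matrix.fromBlocks 1 0 (-p.2.1) 1)) *
          (Matrix.fromBlocks p.1 0 0 (Matrix.fromBlocks 1 0 0 p.1⁻¹)) *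
          (Matrix.fromBlocks 1 0 (Matrix.fromRows p.2.1ᵀ p.2.2ᵀ)
            (Matrix.fromBlocks 1 0 (-p.2.1) 1))ᵀ :=
  stmt4_general n r J G hJ hG hGJ
end

section
/- With N and A as in the block-Gauss decomposition G = N A Nᵀ (block sizes (n,r,n), A = diag(h, I_r, h⁻¹), N block lower unitriangular), the derivative satisfies G'G⁻¹ = X₁ + X₂ + X₃ where X₁ = N A (Nᵀ)' (Nᵀ)⁻¹ A⁻¹ N⁻¹, X₂ = N A' A⁻¹ N⁻¹, X₃ = N' N⁻¹, and moreover (1/2)tr((G'G⁻¹)²) = tr(X₁X₃) + (1/2)tr(X₂²). -/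
open Matrix

/-- Entrywise derivative of a matrix-valued function of a real variable. -/
noncomputable def matDeriv {m n : Type*} (f : ℝ → Matrix m n ℝ) (s : ℝ) : Matrix m n ℝ :=
  Matrix.of fun i j => deriv (fun t => f t i j) s

/-- The block lower unitriangular matrix `N = [[I,0,0],[n₁ᵀ,I,0],[n₂ᵀ,-n₁,I]]`. -/
def Nmat {n r : ℕ} (n₁ : Matrix (Fin n) (Fin r) ℝ) (n₂ : Matrix (Fin n) (Fin n) ℝ) :
    Matrix (Fin n ⊕ (Fin r ⊕ Fin n)) (Fin n ⊕ (Fin r ⊕ Fin n)) ℝ :=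
  Matrix.fromBlocks 1 0 (Matrix.fromRows n₁ᵀ n₂ᵀ) (Matrix.fromBlocks 1 0 (-n₁) 1)

/-- The block diagonal matrix `A = diag(h, I_r, h⁻¹)`. -/
noncomputable def Amat {n r : ℕ} (h : Matrix (Fin n) (Fin n) ℝ) :
    Matrix (Fin n ⊕ (Fin r ⊕ Fin n)) (Fin n ⊕ (Fin r ⊕ Fin n)) ℝ :=
  Matrix.fromBlocks h 0 0 (Matrix.fromBlocks 1 0 0 h⁻¹)

/-!
Conjugating by `N`, the three terms become `L = N⁻¹N'`, strictly block lower triangular because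
`N` is block unitriangular, `D = A'A⁻¹`, block diagonal, and `U = A Lᵀ A⁻¹`, strictly block upper
triangular. A block triangular matrix times a strictly block triangular one of the same
orientation has zero trace, which kills `tr(X₁²)`, `tr(X₃²)`, `tr(X₁X₂)` and `tr(X₂X₃)`;
expanding the square of `X₁ + X₂ + X₃` then leaves `2 tr(X₁X₃) + tr(X₂²)`.
-/

section MatDeriv

variable {m p q : Type*} {s : ℝ}

lemma matDeriv_transpose (f : ℝ → Matrix m p ℝ) (s : ℝ) :
    matDeriv (fun t => (f t)ᵀ) s = (matDeriv f s)ᵀ :=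
  rfl

lemma differentiableAt_mul_apply [Fintype p] {f : ℝ → Matrix m p ℝ} {g : ℝ → Matrix p q ℝ}
    (hf : ∀ i j, DifferentiableAt ℝ (fun t => f t i j) s)
    (hg : ∀ i j, DifferentiableAt ℝ (fun t => g t i j) s) (i : m) (j : q) :
    DifferentiableAt ℝ (fun t => (f t * g t) i j) s := by
  simp only [mul_apply]
  exact DifferentiableAt.fun_sum fun k _ => (hf i k).mul (hg k j)

lemma matDeriv_mul [Fintype p] {f : ℝ → Matrix m p ℝ} {g : ℝ → Matrix p q ℝ}
    (hf : ∀ i j, DifferentiableAt ℝ (fun t => f t i j) s)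
    (hg : ∀ i j, DifferentiableAt ℝ (fun t => g t i j) s) :
    matDeriv (fun t => f t * g t) s = matDeriv f s * g s + f s * matDeriv g s := by
  ext i j
  simp only [matDeriv, mul_apply, of_apply, Matrix.add_apply, ← Finset.sum_add_distrib]
  rw [deriv_fun_sum (A := fun k t => f t i k * g t k j) fun k _ => (hf i k).mul (hg k j)]
  exact Finset.sum_congr rfl fun k _ => deriv_fun_mul (hf i k) (hg k j)

variable [Fintype m] [DecidableEq m] {M : ℝ → Matrix m m ℝ}

lemma differentiableAt_det (hM : ∀ i j, DifferentiableAt ℝ (fun t => M t i j) s) :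
    DifferentiableAt ℝ (fun t => (M t).det) s := by
  simp only [det_apply']
  exact DifferentiableAt.fun_sum fun σ _ =>
    (DifferentiableAt.fun_finsetProd fun i _ => hM (σ i) i).const_mul _

lemma differentiableAt_inv_apply (hM : ∀ i j, DifferentiableAt ℝ (fun t => M t i j) s)
    (hdet : (M s).det ≠ 0) (i j : m) :
    DifferentiableAt ℝ (fun t => (M t)⁻¹ i j) s := by
  have hadj : DifferentiableAt ℝ (fun t => (M t).adjugate i j) s := by
    simp only [adjugate_apply]
    refine differentiableAt_det fun a b => ?_
    by_cases hab : a = j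
    · simp [hab]
    · simpa [hab] using hM a b
  simp only [inv_def, Matrix.smul_apply, Ring.inverse_eq_inv', smul_eq_mul]
  exact ((differentiableAt_det hM).inv hdet).mul hadj

end MatDeriv

namespace Matrix

def StrictBlockTriangular {ι α R : Type*} [LE α] [Zero R] (M : Matrix ι ι R) (b : ι → α) : Prop :=
  ∀ ⦃i j⦄, b j ≤ b i → M i j = 0

variable {ι α R : Type*} [LinearOrder α] [NonUnitalNonAssocSemiring R] {b : ι → α}
  {P Q : Matrix ι ι R}

lemma StrictBlockTriangular.blockTriangular (hP : P.StrictBlockTriangular b) :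
    P.BlockTriangular b :=
  fun _ _ hij => hP hij.le

lemma StrictBlockTriangular.transpose (hP : P.StrictBlockTriangular b) :
    Pᵀ.StrictBlockTriangular (OrderDual.toDual ∘ b) :=
  fun _ _ hij => hP hij

variable [Fintype ι]

lemma BlockTriangular.mul_strictBlockTriangular (hP : P.BlockTriangular b)
    (hQ : Q.StrictBlockTriangular b) : (P * Q).StrictBlockTriangular b := by
  intro i j hji
  refine Finset.sum_eq_zero fun k _ => ?_
  rcases lt_or_ge (b k) (b i) with hki | hik
  · simp [hP hki]
  · simp [hQ (hji.trans hik)]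

lemma StrictBlockTriangular.mul_blockTriangular (hP : P.StrictBlockTriangular b)
    (hQ : Q.BlockTriangular b) : (P * Q).StrictBlockTriangular b := by
  intro i j hji
  refine Finset.sum_eq_zero fun k _ => ?_
  rcases le_or_gt (b k) (b i) with hki | hik
  · simp [hP hki]
  · simp [hQ (hji.trans_lt hik)]

lemma BlockTriangular.trace_mul_eq_zero (hP : P.BlockTriangular b)
    (hQ : Q.StrictBlockTriangular b) : (P * Q).trace = 0 :=
  Finset.sum_eq_zero fun _ _ => hP.mul_strictBlockTriangular hQ le_rfl

end Matrix

section LogDeriv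

open OrderDual

variable {ι α : Type*} [LinearOrder α] {b : ι → α} {s : ℝ} {N A : ℝ → Matrix ι ι ℝ}

lemma blockTriangular_matDeriv (hA : ∀ t, (A t).BlockTriangular b) :
    (matDeriv A s).BlockTriangular b := fun i j hij => by
  simp [matDeriv, fun t => hA t hij]

lemma strictBlockTriangular_matDeriv (C : Matrix ι ι ℝ)
    (hN : ∀ t, (N t - C).StrictBlockTriangular b) :
    (matDeriv N s).StrictBlockTriangular b := fun i j hij => by
  simp [matDeriv, fun t => sub_eq_zero.mp (hN t hij)]

variable [Fintype ι] [DecidableEq ι]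

lemma inv_mul_matDeriv_strictBlockTriangular (hN : ∀ t, (N t - 1).StrictBlockTriangular b)
    (hNs : IsUnit (N s).det) : ((N s)⁻¹ * matDeriv N s).StrictBlockTriangular b := by
  have := invertibleOfIsUnitDet _ hNs
  have hNb : (N s).BlockTriangular b := by
    simpa using (hN s).blockTriangular.add (blockTriangular_one (R := ℝ))
  exact (blockTriangular_inv_of_blockTriangular hNb).mul_strictBlockTriangular
    (strictBlockTriangular_matDeriv 1 hN)

lemma matDeriv_mul_inv_blockTriangular (hA : ∀ t, (A t).BlockTriangular b)
    (hAs : IsUnit (A s).det) : (matDeriv A s * (A s)⁻¹).BlockTriangular b := by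
  have := invertibleOfIsUnitDet _ hAs
  exact (blockTriangular_matDeriv hA).mul (blockTriangular_inv_of_blockTriangular (hA s))

lemma trace_conj_mul_conj {R : Type*} [CommRing R] {M : Matrix ι ι R} (hM : IsUnit M.det)
    (P Q : Matrix ι ι R) :
    (M * P * M⁻¹ * (M * Q * M⁻¹)).trace = (P * Q).trace := by
  rw [show M * P * M⁻¹ * (M * Q * M⁻¹) = M * (P * Q) * M⁻¹ by
      simp only [Matrix.mul_assoc, nonsing_inv_mul_cancel_left _ _ hM],
    trace_mul_cycle, nonsing_inv_mul _ hM, Matrix.one_mul]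

theorem matDeriv_mul_mul_transpose_mul_inv
    (hN : ∀ i j, DifferentiableAt ℝ (fun t => N t i j) s)
    (hA : ∀ i j, DifferentiableAt ℝ (fun t => A t i j) s)
    (hNs : IsUnit (N s).det) (hAs : IsUnit (A s).det) :
    matDeriv (fun t => N t * A t * (N t)ᵀ) s * (N s * A s * (N s)ᵀ)⁻¹ =
      N s * A s * matDeriv (fun t => (N t)ᵀ) s * ((N s)ᵀ)⁻¹ * (A s)⁻¹ * (N s)⁻¹ +
        N s * matDeriv A s * (A s)⁻¹ * (N s)⁻¹ + matDeriv N s * (N s)⁻¹ := by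
  rw [matDeriv_mul (g := fun t => (N t)ᵀ) (differentiableAt_mul_apply hN hA) (fun i j => hN j i),
    matDeriv_mul hN hA, Matrix.mul_inv_rev, Matrix.mul_inv_rev]
  simp only [Matrix.add_mul, Matrix.mul_assoc,
    mul_nonsing_inv_cancel_left _ _ (isUnit_det_transpose _ hNs),
    mul_nonsing_inv_cancel_left _ _ hAs]
  abel

theorem trace_mul_logDeriv_terms_eq_zero (hN : ∀ t, (N t - 1).StrictBlockTriangular b)
    (hA : ∀ t, (A t).BlockTriangular b) (hA' : ∀ t, (A t).BlockTriangular (toDual ∘ b))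
    (hNs : IsUnit (N s).det) (hAs : IsUnit (A s).det) :
    let X₁ := N s * A s * matDeriv (fun t => (N t)ᵀ) s * ((N s)ᵀ)⁻¹ * (A s)⁻¹ * (N s)⁻¹
    let X₂ := N s * matDeriv A s * (A s)⁻¹ * (N s)⁻¹
    let X₃ := matDeriv N s * (N s)⁻¹
    (X₁ * X₁).trace = 0 ∧ (X₃ * X₃).trace = 0 ∧ (X₁ * X₂).trace = 0 ∧ (X₂ * X₃).trace = 0 := by
  intro X₁ X₂ X₃
  set L := (N s)⁻¹ * matDeriv N s
  set D := matDeriv A s * (A s)⁻¹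
  set U := A s * Lᵀ * (A s)⁻¹
  have hL : L.StrictBlockTriangular b := inv_mul_matDeriv_strictBlockTriangular hN hNs
  have hD : D.BlockTriangular b := matDeriv_mul_inv_blockTriangular hA hAs
  have hD' : D.BlockTriangular (toDual ∘ b) := matDeriv_mul_inv_blockTriangular hA' hAs
  have hU : U.StrictBlockTriangular (toDual ∘ b) := by
    have := invertibleOfIsUnitDet _ hAs
    exact ((hA' s).mul_strictBlockTriangular hL.transpose).mul_blockTriangular
      (blockTriangular_inv_of_blockTriangular (hA' s))
  have hX₁ : X₁ = N s * U * (N s)⁻¹ := by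
    simp only [X₁, U, L, transpose_mul, matDeriv_transpose, transpose_nonsing_inv,
      Matrix.mul_assoc]
  have hX₂ : X₂ = N s * D * (N s)⁻¹ := by simp only [X₂, D, Matrix.mul_assoc]
  have hX₃ : X₃ = N s * L * (N s)⁻¹ := by
    simp only [X₃, L, mul_nonsing_inv_cancel_left _ _ hNs]
  simp only [hX₁, hX₂, hX₃, trace_conj_mul_conj hNs]
  refine ⟨hU.blockTriangular.trace_mul_eq_zero hU, hL.blockTriangular.trace_mul_eq_zero hL,
    ?_, hD.trace_mul_eq_zero hL⟩
  rw [trace_mul_comm]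
  exact hD'.trace_mul_eq_zero hU

end LogDeriv

lemma trace_add_add_mul_self {ι R : Type*} [Fintype ι] [CommRing R] {X₁ X₂ X₃ : Matrix ι ι R}
    (h₁₁ : (X₁ * X₁).trace = 0) (h₃₃ : (X₃ * X₃).trace = 0) (h₁₂ : (X₁ * X₂).trace = 0)
    (h₂₃ : (X₂ * X₃).trace = 0) :
    ((X₁ + X₂ + X₃) * (X₁ + X₂ + X₃)).trace = 2 * (X₁ * X₃).trace + (X₂ * X₂).trace := by
  simp only [Matrix.add_mul, Matrix.mul_add, trace_add]
  rw [trace_mul_comm X₂ X₁, trace_mul_comm X₃ X₁, trace_mul_comm X₃ X₂, h₁₁, h₃₃, h₁₂, h₂₃]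
  ring

section GaussBlocks

open OrderDual

variable {n r : ℕ}

/-- Numbered downwards, so that the lower triangular `Nmat` is block triangular in the upper
triangular sense of `Matrix.BlockTriangular`. -/
def gaussBlock : Fin n ⊕ (Fin r ⊕ Fin n) → ℕ
  | .inl _ => 2
  | .inr (.inl _) => 1
  | .inr (.inr _) => 0

lemma Nmat_sub_one_strictBlockTriangular (n₁ : Matrix (Fin n) (Fin r) ℝ)
    (n₂ : Matrix (Fin n) (Fin n) ℝ) : (Nmat n₁ n₂ - 1).StrictBlockTriangular gaussBlock := by
  rintro (i | i | i) (j | j | j) hij <;> simp [Nmat, gaussBlock, one_apply] at hij ⊢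

lemma det_Nmat (n₁ : Matrix (Fin n) (Fin r) ℝ) (n₂ : Matrix (Fin n) (Fin n) ℝ) :
    (Nmat n₁ n₂).det = 1 := by
  simp [Nmat, det_fromBlocks_zero₁₂]

lemma Amat_blockTriangular (h : Matrix (Fin n) (Fin n) ℝ) :
    (Amat (r := r) h).BlockTriangular gaussBlock := by
  rintro (i | i | i) (j | j | j) hij <;> simp [Amat, gaussBlock] at hij ⊢

lemma Amat_blockTriangular_toDual (h : Matrix (Fin n) (Fin n) ℝ) :
    (Amat (r := r) h).BlockTriangular (toDual ∘ gaussBlock) := by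
  rintro (i | i | i) (j | j | j) hij <;> simp [Amat, gaussBlock] at hij ⊢

lemma isUnit_det_Amat {h : Matrix (Fin n) (Fin n) ℝ} (hh : h.det ≠ 0) :
    IsUnit (Amat (r := r) h).det := by
  simp [Amat, hh]

variable {s : ℝ}

lemma differentiableAt_Nmat_apply {n₁ : ℝ → Matrix (Fin n) (Fin r) ℝ}
    {n₂ : ℝ → Matrix (Fin n) (Fin n) ℝ}
    (hn₁ : ∀ i j, DifferentiableAt ℝ (fun t => n₁ t i j) s)
    (hn₂ : ∀ i j, DifferentiableAt ℝ (fun t => n₂ t i j) s) (i j) :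
    DifferentiableAt ℝ (fun t => Nmat (n₁ t) (n₂ t) i j) s := by
  rcases i with i | i | i <;> rcases j with j | j | j <;> simp [Nmat, hn₁, hn₂]

lemma differentiableAt_Amat_apply {h : ℝ → Matrix (Fin n) (Fin n) ℝ}
    (hh : ∀ i j, DifferentiableAt ℝ (fun t => h t i j) s) (hdet : (h s).det ≠ 0) (i j) :
    DifferentiableAt ℝ (fun t => Amat (r := r) (h t) i j) s := by
  rcases i with i | i | i <;> rcases j with j | j | j <;>
    simp [Amat, hh, differentiableAt_inv_apply hh hdet]

end GaussBlocks

theorem stmt6_general (n r : ℕ)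
    (h : ℝ → Matrix (Fin n) (Fin n) ℝ)
    (n₁ : ℝ → Matrix (Fin n) (Fin r) ℝ) (n₂ : ℝ → Matrix (Fin n) (Fin n) ℝ)
    (hdiff : ∀ i j, Differentiable ℝ fun s => h s i j)
    (n₁diff : ∀ i j, Differentiable ℝ fun s => n₁ s i j)
    (n₂diff : ∀ i j, Differentiable ℝ fun s => n₂ s i j)
    (hpos : ∀ s, (h s).PosDef)
    (N A G : ℝ → Matrix (Fin n ⊕ (Fin r ⊕ Fin n)) (Fin n ⊕ (Fin r ⊕ Fin n)) ℝ)
    (hN : ∀ s, N s = Nmat (n₁ s) (n₂ s)) (hA : ∀ s, A s = Amat (h s))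
    (hG : ∀ s, G s = N s * A s * (N s)ᵀ) (s : ℝ) :
    let X₁ := N s * A s * (matDeriv (fun t => (N t)ᵀ) s) * ((N s)ᵀ)⁻¹ * (A s)⁻¹ * (N s)⁻¹
    let X₂ := N s * matDeriv A s * (A s)⁻¹ * (N s)⁻¹
    let X₃ := matDeriv N s * (N s)⁻¹
    matDeriv G s * (G s)⁻¹ = X₁ + X₂ + X₃ ∧
    (X₁ * X₁).trace = 0 ∧ (X₃ * X₃).trace = 0 ∧
    (X₁ * X₂).trace = 0 ∧ (X₂ * X₃).trace = 0 ∧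
    (1 / 2 : ℝ) * (matDeriv G s * (G s)⁻¹ * (matDeriv G s * (G s)⁻¹)).trace =
      (X₁ * X₃).trace + (1 / 2 : ℝ) * (X₂ * X₂).trace := by
  intro X₁ X₂ X₃
  obtain rfl : G = fun t => N t * A t * (N t)ᵀ := funext hG
  have hdet : (h s).det ≠ 0 := (hpos s).det_pos.ne'
  have hNs : IsUnit (N s).det := by simp [hN, det_Nmat]
  have hAs : IsUnit (A s).det := hA s ▸ isUnit_det_Amat hdet
  have hNd (i j) : DifferentiableAt ℝ (fun t => N t i j) s := by
    simpa only [hN] using differentiableAt_Nmat_apply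
      (fun i j => (n₁diff i j).differentiableAt) (fun i j => (n₂diff i j).differentiableAt) i j
  have hAd (i j) : DifferentiableAt ℝ (fun t => A t i j) s := by
    simpa only [hA] using
      differentiableAt_Amat_apply (fun i j => (hdiff i j).differentiableAt) hdet i j
  have hsplit := matDeriv_mul_mul_transpose_mul_inv hNd hAd hNs hAs
  obtain ⟨h₁₁, h₃₃, h₁₂, h₂₃⟩ := trace_mul_logDeriv_terms_eq_zero
    (fun t => hN t ▸ Nmat_sub_one_strictBlockTriangular (n₁ t) (n₂ t))
    (fun t => hA t ▸ Amat_blockTriangular (h t))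
    (fun t => hA t ▸ Amat_blockTriangular_toDual (h t)) hNs hAs
  refine ⟨hsplit, h₁₁, h₃₃, h₁₂, h₂₃, ?_⟩
  rw [hsplit, trace_add_add_mul_self h₁₁ h₃₃ h₁₂ h₂₃]
  ring

/-- with `G = N A Nᵀ` as in the block-Gauss decomposition,
`G'G⁻¹ = X₁ + X₂ + X₃` where `X₁ = N A (Nᵀ)'(Nᵀ)⁻¹A⁻¹N⁻¹`, `X₂ = N A'A⁻¹N⁻¹`,
`X₃ = N'N⁻¹`; the cross terms `tr(X₁²), tr(X₃²), tr(X₁X₂), tr(X₂X₃)` vanish; and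
`(1/2)tr((G'G⁻¹)²) = tr(X₁X₃) + (1/2)tr(X₂²)`. -/
theorem stmt6 (n r : ℕ)
    (h : ℝ → Matrix (Fin n) (Fin n) ℝ)
    (n₁ : ℝ → Matrix (Fin n) (Fin r) ℝ) (n₂ : ℝ → Matrix (Fin n) (Fin n) ℝ)
    (hdiff : ∀ i j, Differentiable ℝ fun s => h s i j)
    (n₁diff : ∀ i j, Differentiable ℝ fun s => n₁ s i j)
    (n₂diff : ∀ i j, Differentiable ℝ fun s => n₂ s i j)
    (hpos : ∀ s, (h s).PosDef) (hsymm : ∀ s, (h s)ᵀ = h s)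
    (hconstr : ∀ s, n₂ s + (n₂ s)ᵀ = -(n₁ s * (n₁ s)ᵀ))
    (N A G : ℝ → Matrix (Fin n ⊕ (Fin r ⊕ Fin n)) (Fin n ⊕ (Fin r ⊕ Fin n)) ℝ)
    (hN : ∀ s, N s = Nmat (n₁ s) (n₂ s)) (hA : ∀ s, A s = Amat (h s))
    (hG : ∀ s, G s = N s * A s * (N s)ᵀ) (s : ℝ) :
    let X₁ := N s * A s * (matDeriv (fun t => (N t)ᵀ) s) * ((N s)ᵀ)⁻¹ * (A s)⁻¹ * (N s)⁻¹
    let X₂ := N s * matDeriv A s * (A s)⁻¹ * (N s)⁻¹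
    let X₃ := matDeriv N s * (N s)⁻¹
    matDeriv G s * (G s)⁻¹ = X₁ + X₂ + X₃ ∧
    (X₁ * X₁).trace = 0 ∧ (X₃ * X₃).trace = 0 ∧
    (X₁ * X₂).trace = 0 ∧ (X₂ * X₃).trace = 0 ∧
    (1 / 2 : ℝ) * (matDeriv G s * (G s)⁻¹ * (matDeriv G s * (G s)⁻¹)).trace =
      (X₁ * X₃).trace + (1 / 2 : ℝ) * (X₂ * X₂).trace :=
  stmt6_general n r h n₁ n₂ hdiff n₁diff n₂diff hpos N A G hN hA hG s
end

section
/- Let B = B(b,a,0) = [[b,a,0],[aᵀ,0,-aᵀ],[0,-a,-b]] with b ∈ Sym_n(ℝ) and a ∈ M_{n,r}(ℝ), and let G(s) = exp(sB). Define h(s) to be the upper-left n×n block of G(s). Then h(s) is symmetric positive definite for all s and satisfies the matrix-valued Bratu equation (h'(s)h(s)⁻¹)' = (a aᵀ) h(s)⁻¹. -/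
/-!
`B` is symmetric, so `G(s) = exp(sB) = G(s/2)ᵀ G(s/2)` is positive definite, and so is its
leading block `h`. Conjugating by the permutation `J` that exchanges the two outer blocks negates
`B`, hence `J G J = G⁻¹`. Differentiating, `(h'h⁻¹)' = (h'' - h'h⁻¹h')h⁻¹`, and a block computation
shows `h'' - h'h⁻¹h' = a σ aᵀ`, where `σ = G₂₂ - G₂₁ h⁻¹ G₁₂` is the Schur complement of `h` in the
leading `(n + r)`-block of `G`. The block relations encoded in `G J G J = 1` give `σ² = 1`, and
`σ` is positive semidefinite as a Schur complement of a positive definite matrix, so `σ = 1`.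
-/

open Matrix

open NormedSpace

abbrev Sum.inrl {α β γ : Type*} : β → α ⊕ (β ⊕ γ) := Sum.inr ∘ Sum.inl

abbrev Sum.inrr {α β γ : Type*} : γ → α ⊕ (β ⊕ γ) := Sum.inr ∘ Sum.inr

namespace Matrix

section Blocks

variable {R l m k n o p q : Type*}

theorem submatrix_one_eq_zero [Zero R] [One R] [DecidableEq n] {f : p → n} {g : q → n}
    (hfg : ∀ i j, f i ≠ g j) : (1 : Matrix n n R).submatrix f g = 0 := by
  ext i j
  simp [hfg]

theorem submatrix_mul_sum_sum [Fintype m] [Fintype k] [Fintype n] [NonUnitalNonAssocSemiring R]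
    (X : Matrix l (m ⊕ (k ⊕ n)) R) (Y : Matrix (m ⊕ (k ⊕ n)) o R) (f : p → l) (g : q → o) :
    (X * Y).submatrix f g =
      X.submatrix f Sum.inl * Y.submatrix Sum.inl g +
      X.submatrix f Sum.inrl * Y.submatrix Sum.inrl g +
      X.submatrix f Sum.inrr * Y.submatrix Sum.inrr g := by
  ext i j
  simp [mul_apply, Fintype.sum_sum_type, add_assoc]

def outerSwap : m ⊕ (k ⊕ m) ≃ m ⊕ (k ⊕ m) where
  toFun := Sum.elim Sum.inrr (Sum.elim Sum.inrl Sum.inl)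
  invFun := Sum.elim Sum.inrr (Sum.elim Sum.inrl Sum.inl)
  left_inv := by rintro (_ | _ | _) <;> rfl
  right_inv := by rintro (_ | _ | _) <;> rfl

@[simp] theorem outerSwap_comp_inl : ⇑(outerSwap : m ⊕ (k ⊕ m) ≃ _) ∘ Sum.inl = Sum.inrr := rfl

@[simp] theorem outerSwap_comp_inrl : ⇑(outerSwap : m ⊕ (k ⊕ m) ≃ _) ∘ Sum.inrl = Sum.inrl := rfl

@[simp] theorem outerSwap_comp_inrr : ⇑(outerSwap : m ⊕ (k ⊕ m) ≃ _) ∘ Sum.inrr = Sum.inl := rfl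

/-- The Schur complement of the leading block in the leading `m ⊕ k` principal submatrix. -/
noncomputable def schurComplementMid [Fintype m] [DecidableEq m] [CommRing R]
    (G : Matrix (m ⊕ (k ⊕ n)) (m ⊕ (k ⊕ n)) R) : Matrix k k R :=
  G.submatrix Sum.inrl Sum.inrl -
    G.submatrix Sum.inrl Sum.inl * (G.submatrix Sum.inl Sum.inl)⁻¹ * G.submatrix Sum.inl Sum.inrl

theorem schurComplementMid_mul_self [Fintype m] [Fintype k] [DecidableEq m] [DecidableEq k]
    [CommRing R] {G : Matrix (m ⊕ (k ⊕ m)) (m ⊕ (k ⊕ m)) R}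
    (hG : G * G.submatrix outerSwap outerSwap = 1)
    (hh : IsUnit (G.submatrix Sum.inl Sum.inl).det) :
    schurComplementMid G * schurComplementMid G = 1 := by
  have hG' : G.submatrix outerSwap outerSwap * G = 1 := mul_eq_one_comm.1 hG
  have e13 := congrArg (·.submatrix (Sum.inl : m → _) (Sum.inrr : m → _)) hG
  have e23 := congrArg (·.submatrix (Sum.inrl : k → _) (Sum.inrr : m → _)) hG
  have e22 := congrArg (·.submatrix (Sum.inrl : k → _) (Sum.inrl : k → _)) hG
  have e32 := congrArg (·.submatrix (Sum.inrr : m → _) (Sum.inrl : k → _)) hG'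
  simp only [submatrix_mul_sum_sum, submatrix_submatrix, outerSwap_comp_inl, outerSwap_comp_inrl,
    outerSwap_comp_inrr] at e13 e23 e22 e32
  rw [submatrix_one_eq_zero (by simp)] at e13 e23 e32
  rw [submatrix_one _ (Sum.inr_injective.comp Sum.inl_injective)] at e22
  set h := G.submatrix Sum.inl Sum.inl
  set c := G.submatrix (Sum.inrl : k → _) Sum.inrl
  set u := G.submatrix (Sum.inrl : k → _) Sum.inl
  set v := G.submatrix Sum.inl (Sum.inrl : k → _)
  set x := G.submatrix (Sum.inrl : k → _) Sum.inrr
  set y := G.submatrix Sum.inrr (Sum.inrl : k → _)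
  set w := G.submatrix Sum.inrr Sum.inl
  set w' := G.submatrix Sum.inl Sum.inrr
  have e23' : u * w * h⁻¹ + c * u * h⁻¹ + x = 0 := by
    simpa [Matrix.add_mul, Matrix.mul_assoc, mul_nonsing_inv _ hh] using congrArg (· * h⁻¹) e23
  have e32' : h⁻¹ * w' * v + h⁻¹ * v * c + y = 0 := by
    simpa [Matrix.mul_add, ← Matrix.mul_assoc, nonsing_inv_mul _ hh] using congrArg (h⁻¹ * ·) e32
  have e13' : w * h⁻¹ + h⁻¹ * v * u * h⁻¹ + h⁻¹ * w' = 0 := by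
    simpa [Matrix.mul_add, Matrix.add_mul, ← Matrix.mul_assoc, nonsing_inv_mul _ hh,
      mul_nonsing_inv_cancel_right _ _ hh] using congrArg (h⁻¹ * · * h⁻¹) e13
  calc schurComplementMid G * schurComplementMid G
      = (u * y + c * c + x * v) - u * (h⁻¹ * w' * v + h⁻¹ * v * c + y)
          - (u * w * h⁻¹ + c * u * h⁻¹ + x) * v
          + u * (w * h⁻¹ + h⁻¹ * v * u * h⁻¹ + h⁻¹ * w') * v := by
        simp only [schurComplementMid, Matrix.mul_add, Matrix.add_mul, Matrix.mul_sub,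
          Matrix.sub_mul, Matrix.mul_assoc]
        abel
    _ = 1 := by rw [e22, e23', e32', e13']; simp

end Blocks

section PosSemidef

open scoped ComplexOrder

variable {𝕜 m k : Type*} [RCLike 𝕜] [Fintype m] [Fintype k]

theorem PosSemidef.eq_one_of_mul_self_eq_one_s8 [DecidableEq k] {S : Matrix k k 𝕜}
    (hS : S.PosSemidef) (h : S * S = 1) : S = 1 := by
  have hunit : IsUnit (S + 1) := (PosDef.posSemidef_add hS PosDef.one).isUnit
  have : (S + 1) * (S - 1) = 0 := by
    rw [Matrix.add_mul, Matrix.mul_sub, Matrix.mul_sub, h]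
    simp
  exact sub_eq_zero.1 (hunit.mul_right_eq_zero.1 this)

theorem PosSemidef.schurComplement_toBlocks₁₁ [DecidableEq m] {W : Matrix (m ⊕ k) (m ⊕ k) 𝕜}
    (hW : W.PosSemidef) (hA : W.toBlocks₁₁.PosDef) :
    (W.toBlocks₂₂ - W.toBlocks₂₁ * W.toBlocks₁₁⁻¹ * W.toBlocks₁₂).PosSemidef := by
  have h21 : W.toBlocks₂₁ = W.toBlocks₁₂ᴴ := by
    ext i j
    exact (congr_fun₂ hW.isHermitian.eq (Sum.inr i) (Sum.inl j)).symm
  have := hA.isUnit.invertible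
  rw [← fromBlocks_toBlocks W, h21] at hW
  rw [h21]
  exact (PosDef.fromBlocks₁₁ _ _ hA).1 hW

theorem PosSemidef.schurComplementMid [DecidableEq m] {n : Type*} [Fintype n]
    {G : Matrix (m ⊕ (k ⊕ n)) (m ⊕ (k ⊕ n)) 𝕜} (hG : G.PosSemidef)
    (hh : (G.submatrix Sum.inl Sum.inl).PosDef) : (schurComplementMid G).PosSemidef :=
  (hG.submatrix (Sum.map id Sum.inl)).schurComplement_toBlocks₁₁ hh

end PosSemidef

section BratuMatrix

variable {R m k n : Type*} [Fintype m] [Fintype k] [Fintype n] [DecidableEq m] [CommRing R]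

/-- The matrix `B(b, a, 0) = [[b, a, 0], [aᵀ, 0, -aᵀ], [0, -a, -b]]`. -/
def bratuMatrix (b : Matrix m m R) (a : Matrix m k R) : Matrix (m ⊕ (k ⊕ m)) (m ⊕ (k ⊕ m)) R :=
  fromBlocks b (fromCols a 0) (fromRows aᵀ 0) (fromBlocks 0 (-aᵀ) (-a) (-b))

omit [Fintype m] [Fintype k] [Fintype n] [DecidableEq m] in
theorem transpose_bratuMatrix {b : Matrix m m R} (hb : bᵀ = b) (a : Matrix m k R) :
    (bratuMatrix b a)ᵀ = bratuMatrix b a := by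
  ext (i | j | i) (i' | j' | i') <;> simp [bratuMatrix]
  all_goals exact congr_fun₂ hb _ _

omit [Fintype m] [Fintype k] [Fintype n] [DecidableEq m] in
theorem submatrix_outerSwap_bratuMatrix (b : Matrix m m R) (a : Matrix m k R) :
    (bratuMatrix b a).submatrix outerSwap outerSwap = -bratuMatrix b a := by
  ext (i | j | i) (i' | j' | i') <;> simp [bratuMatrix, outerSwap]

theorem submatrix_inl_mul_mul_sub_eq_mul_schurComplementMid {b : Matrix m m R} {a : Matrix m k R}
    {D : Matrix (k ⊕ n) (k ⊕ n) R} {B G : Matrix (m ⊕ (k ⊕ n)) (m ⊕ (k ⊕ n)) R}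
    (hB : B = fromBlocks b (fromCols a 0) (fromRows aᵀ 0) D) (hBG : Commute B G)
    (hh : IsUnit (G.submatrix Sum.inl Sum.inl).det) :
    (B * G * B).submatrix Sum.inl Sum.inl - (B * G).submatrix Sum.inl Sum.inl *
        (G.submatrix Sum.inl Sum.inl)⁻¹ * (B * G).submatrix Sum.inl Sum.inl =
      a * schurComplementMid G * aᵀ := by
  have hB11 : B.submatrix Sum.inl Sum.inl = b := by subst hB; rfl
  have hB12 : B.submatrix Sum.inl (Sum.inrl : k → _) = a := by subst hB; rfl
  have hB13 : B.submatrix Sum.inl (Sum.inrr : n → _) = 0 := by subst hB; rfl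
  have hB21 : B.submatrix (Sum.inrl : k → _) Sum.inl = aᵀ := by subst hB; rfl
  have hB31 : B.submatrix (Sum.inrr : n → _) Sum.inl = 0 := by subst hB; rfl
  set h := G.submatrix Sum.inl Sum.inl
  set c := G.submatrix (Sum.inrl : k → _) Sum.inrl
  set u := G.submatrix (Sum.inrl : k → _) Sum.inl
  set v := G.submatrix Sum.inl (Sum.inrl : k → _)
  have hBG₁₁ : (B * G).submatrix Sum.inl Sum.inl = b * h + a * u := by
    simp only [submatrix_mul_sum_sum, hB11, hB12, hB13, Matrix.zero_mul, add_zero]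
    rfl
  have hGB₁₁ : (B * G).submatrix Sum.inl Sum.inl = h * b + v * aᵀ := by
    simp only [hBG.eq, submatrix_mul_sum_sum, hB11, hB21, hB31, Matrix.mul_zero, add_zero]
    rfl
  have hBGB₁₁ :
      (B * G * B).submatrix Sum.inl Sum.inl = (b * h + a * u) * b + (b * v + a * c) * aᵀ := by
    simp only [submatrix_mul_sum_sum (B * G) B, hB11, hB21, hB31, Matrix.mul_zero, add_zero,
      hBG₁₁]
    simp only [submatrix_mul_sum_sum B G, hB11, hB12, hB13, Matrix.zero_mul, add_zero]
    rfl
  rw [hBGB₁₁, show (B * G).submatrix Sum.inl Sum.inl * h⁻¹ * (B * G).submatrix Sum.inl Sum.inl =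
    (b * h + a * u) * h⁻¹ * (h * b + v * aᵀ) by rw [← hBG₁₁, ← hGB₁₁]]
  simp only [schurComplementMid, Matrix.add_mul, Matrix.mul_add, Matrix.mul_sub, Matrix.sub_mul,
    Matrix.mul_assoc, mul_nonsing_inv_cancel_left _ _ hh, nonsing_inv_mul_cancel_left _ _ hh]
  abel

end BratuMatrix

end Matrix

section Calculus

open scoped Matrix.Norms.Operator

variable {m n p q : Type*} [Fintype n] [Fintype q]

theorem matDeriv_eq_of_hasDerivAt {f : ℝ → Matrix m n ℝ} {f' : Matrix m n ℝ} {s : ℝ}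
    (hf : HasDerivAt f f' s) : matDeriv f s = f' := by
  ext i j
  exact (hasDerivAt_pi.1 (hasDerivAt_pi.1 hf i) j).deriv

theorem HasDerivAt.matrix_submatrix {f : ℝ → Matrix m n ℝ} {f' : Matrix m n ℝ} {s : ℝ}
    (hf : HasDerivAt f f' s) (e₁ : p → m) (e₂ : q → n) :
    HasDerivAt (fun t => (f t).submatrix e₁ e₂) (f'.submatrix e₁ e₂) s :=
  hasDerivAt_pi.2 fun i => hasDerivAt_pi.2 fun j =>
    hasDerivAt_pi.1 (hasDerivAt_pi.1 hf (e₁ i)) (e₂ j)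

theorem HasDerivAt.matrix_inv [DecidableEq n] {f : ℝ → Matrix n n ℝ} {f' : Matrix n n ℝ} {s : ℝ}
    (hf : HasDerivAt f f' s) (hs : IsUnit (f s).det) :
    HasDerivAt (fun t => (f t)⁻¹) (-((f s)⁻¹ * f' * (f s)⁻¹)) s := by
  obtain ⟨u, hu⟩ := (isUnit_iff_isUnit_det _).2 hs
  have hinv := hasFDerivAt_ringInverse (𝕜 := ℝ) u
  rw [← Ring.inverse_unit, hu, ← nonsing_inv_eq_ringInverse] at hinv
  have := hinv.comp_hasDerivAt s hf
  simp only [Function.comp_def, _root_.neg_apply, ContinuousLinearMap.mulLeftRight_apply,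
    ← nonsing_inv_eq_ringInverse] at this
  exact this

theorem matDeriv_mul_inv [DecidableEq n] {f f' : ℝ → Matrix n n ℝ} {f'' : Matrix n n ℝ} {s : ℝ}
    (hf : ∀ t, HasDerivAt f (f' t) t) (hf' : HasDerivAt f' f'' s) (hs : IsUnit (f s).det) :
    matDeriv (fun t => matDeriv f t * (f t)⁻¹) s = (f'' - f' s * (f s)⁻¹ * f' s) * (f s)⁻¹ := by
  have hlog : (fun t => matDeriv f t * (f t)⁻¹) = fun t => f' t * (f t)⁻¹ :=
    funext fun t => by rw [matDeriv_eq_of_hasDerivAt (hf t)]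
  have hd : HasDerivAt (fun t => f' t * (f t)⁻¹) _ s := hf'.mul ((hf s).matrix_inv hs)
  rw [hlog, matDeriv_eq_of_hasDerivAt hd]
  noncomm_ring

theorem Matrix.hasDerivAt_exp_smul [DecidableEq n] (B : Matrix n n ℝ) (s : ℝ) :
    HasDerivAt (fun t => exp (t • B)) (B * exp (s • B)) s :=
  hasDerivAt_exp_smul_const' B s

theorem Matrix.hasDerivAt_mul_exp_smul [DecidableEq n] (B : Matrix n n ℝ) (s : ℝ) :
    HasDerivAt (fun t => B * exp (t • B)) (B * exp (s • B) * B) s := by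
  have := (hasDerivAt_exp_smul_const B s).const_mul B
  rw [← mul_assoc] at this
  exact this

end Calculus

section Exp

variable {m k n 𝕜 : Type*} [Fintype m] [DecidableEq m] [Fintype k] [DecidableEq k] [Fintype n]
  [DecidableEq n] [RCLike 𝕜]

open scoped Matrix.Norms.Operator in
theorem Matrix.exp_submatrix_equiv (e : m ≃ n) (A : Matrix n n 𝕜) :
    exp (A.submatrix e e) = (exp A).submatrix e e := by
  have hcont : Continuous (reindexAlgEquiv 𝕜 𝕜 e.symm) := continuous_id.matrix_submatrix _ _
  have := (map_exp (reindexAlgEquiv 𝕜 𝕜 e.symm) hcont A).symm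
  simp only [coe_reindexAlgEquiv, reindex_apply, Equiv.symm_symm] at this
  exact this

theorem transpose_exp_smul {B : Matrix n n ℝ} (hB : Bᵀ = B) (s : ℝ) :
    (exp (s • B))ᵀ = exp (s • B) := by
  rw [← exp_transpose, transpose_smul, hB]

theorem posDef_exp_smul {B : Matrix n n ℝ} (hB : Bᵀ = B) (s : ℝ) : (exp (s • B)).PosDef := by
  have hhalf : exp (s • B) = (exp ((s / 2) • B))ᴴ * exp ((s / 2) • B) := by
    rw [conjTranspose_eq_transpose_of_trivial, transpose_exp_smul hB,
      ← exp_add_of_commute _ _ (((Commute.refl B).smul_left _).smul_right _), ← add_smul,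
      add_halves]
  rw [hhalf]
  exact PosDef.conjTranspose_mul_self _ (mulVec_injective_iff_isUnit.2 (isUnit_exp _))

theorem Matrix.exp_smul_mul_submatrix_outerSwap {B : Matrix (m ⊕ (k ⊕ m)) (m ⊕ (k ⊕ m)) ℝ}
    (hB : B.submatrix outerSwap outerSwap = -B) (s : ℝ) :
    exp (s • B) * (exp (s • B)).submatrix outerSwap outerSwap = 1 := by
  have hsB : (s • B).submatrix outerSwap outerSwap = -(s • B) := by
    rw [← smul_neg, ← hB]
    rfl
  rw [← exp_submatrix_equiv, hsB, exp_neg]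
  exact mul_nonsing_inv _ ((isUnit_iff_isUnit_det _).1 (isUnit_exp _))

end Exp

/-- let `B = B(b,a,0) = [[b,a,0],[aᵀ,0,-aᵀ],[0,-a,-b]]` with `b` symmetric,
`G(s) = exp(sB)`, and `h(s)` the upper-left `n×n` block of `G(s)`. Then `h(s)` is
symmetric positive definite and satisfies the matrix Bratu equation
`(h'h⁻¹)' = (a aᵀ) h⁻¹`. -/
theorem stmt8 (n r : ℕ)
    (b : Matrix (Fin n) (Fin n) ℝ) (a : Matrix (Fin n) (Fin r) ℝ) (hb : bᵀ = b)
    (B : Matrix (Fin n ⊕ (Fin r ⊕ Fin n)) (Fin n ⊕ (Fin r ⊕ Fin n)) ℝ)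
    (hB : B = Matrix.fromBlocks b (Matrix.fromCols a 0) (Matrix.fromRows aᵀ 0)
      (Matrix.fromBlocks 0 (-aᵀ) (-a) (-b)))
    (h : ℝ → Matrix (Fin n) (Fin n) ℝ)
    (hh : ∀ s, h s = (NormedSpace.exp (s • B)).toBlocks₁₁) (s : ℝ) :
    (h s).PosDef ∧ (h s)ᵀ = h s ∧
      matDeriv (fun t => matDeriv h t * (h t)⁻¹) s = a * aᵀ * (h s)⁻¹ := by
  have hBt : Bᵀ = B := hB ▸ transpose_bratuMatrix hb a
  have hBJ : B.submatrix outerSwap outerSwap = -B := hB ▸ submatrix_outerSwap_bratuMatrix b a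
  obtain rfl : h = fun t => (exp (t • B)).submatrix Sum.inl Sum.inl := funext hh
  have hpd (t : ℝ) : ((exp (t • B)).submatrix Sum.inl Sum.inl).PosDef :=
    (posDef_exp_smul hBt t).submatrix Sum.inl_injective
  have hdet : IsUnit ((exp (s • B)).submatrix Sum.inl Sum.inl).det := (hpd s).det_pos.ne'.isUnit
  have hσ : schurComplementMid (exp (s • B)) = 1 :=
    ((posDef_exp_smul hBt s).posSemidef.schurComplementMid (hpd s)).eq_one_of_mul_self_eq_one_s8
      (schurComplementMid_mul_self (exp_smul_mul_submatrix_outerSwap hBJ s) hdet)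
  refine ⟨hpd s, by simpa [conjTranspose_eq_transpose_of_trivial] using (hpd s).isHermitian.eq, ?_⟩
  have hh' (t : ℝ) := (hasDerivAt_exp_smul B t).matrix_submatrix Sum.inl Sum.inl
  have hh'' := (hasDerivAt_mul_exp_smul B s).matrix_submatrix Sum.inl Sum.inl
  have hBG : Commute B (exp (s • B)) := ((Commute.refl B).smul_right s).exp_right
  rw [matDeriv_mul_inv hh' hh'' hdet,
    submatrix_inl_mul_mul_sub_eq_mul_schurComplementMid hB hBG hdet, hσ, Matrix.mul_one]
end

section
/- Let K = diag(I_n, -I_{n+r}) and let G(K) = {g ∈ GL_{2n+r}(ℝ) : KgK = (gᵀ)⁻¹}. For g ∈ G(K), g fixes v₀ = [[I_n],[0]] up to right GL_n(ℝ)-multiplication (i.e., g is block upper triangular with respect to the partition (n, n+r)) if and only if g is orthogonal (gᵀ = g⁻¹). -/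
open Matrix

/-- for `K = diag(I_n, -I_{n+r})` and `g ∈ G(K)`, i.e. invertible with
`KgK = (gᵀ)⁻¹`, the matrix `g` fixes `v₀ = [[I_n],[0]]` up to right `GL_n(ℝ)`-action
(equivalently is block upper triangular, i.e. has vanishing `(2,1)` block) if and only
if `g` is orthogonal: `gᵀ = g⁻¹`. -/
theorem stmt12 (n r : ℕ)
    (K g : Matrix (Fin n ⊕ Fin (n + r)) (Fin n ⊕ Fin (n + r)) ℝ)
    (hK : K = Matrix.fromBlocks 1 0 0 (-1))
    (hg : IsUnit g.det) (hgK : K * g * K = (gᵀ)⁻¹) :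
    g.toBlocks₂₁ = 0 ↔ gᵀ = g⁻¹ := by
  have hKK : K * K = 1 := by
    subst hK
    simp [Matrix.fromBlocks_multiply, ← Matrix.fromBlocks_one]
  have hgT : IsUnit gᵀ.det := by rwa [Matrix.det_transpose]
  have h1 : gᵀ * K * g = K := by
    have h : gᵀ * (K * g * K) * K = K := by
      rw [hgK, Matrix.mul_nonsing_inv _ hgT, Matrix.one_mul]
    rw [Matrix.mul_assoc gᵀ (K * g * K) K, Matrix.mul_assoc (K * g) K K, hKK,
      Matrix.mul_one, ← Matrix.mul_assoc] at h
    exact h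
  set A := g.toBlocks₁₁ with hA
  set B := g.toBlocks₁₂ with hB
  set C := g.toBlocks₂₁ with hC
  set D := g.toBlocks₂₂ with hD
  have hgdec : g = Matrix.fromBlocks A B C D := (Matrix.fromBlocks_toBlocks g).symm
  -- block form of gᵀ K g = K
  have h2 : Matrix.fromBlocks (Aᵀ * A - Cᵀ * C) (Aᵀ * B - Cᵀ * D)
      (Bᵀ * A - Dᵀ * C) (Bᵀ * B - Dᵀ * D) = Matrix.fromBlocks 1 0 0 (-1) := by
    rw [← hK, ← h1, hgdec, hK]
    simp [Matrix.fromBlocks_transpose, Matrix.fromBlocks_multiply, sub_eq_add_neg,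
      Matrix.mul_neg]
  have e11 : Aᵀ * A - Cᵀ * C = 1 := by
    have := congrArg Matrix.toBlocks₁₁ h2; simpa using this
  have e12 : Aᵀ * B - Cᵀ * D = 0 := by
    have := congrArg Matrix.toBlocks₁₂ h2; simpa using this
  have e22 : Bᵀ * B - Dᵀ * D = -1 := by
    have := congrArg Matrix.toBlocks₂₂ h2; simpa using this
  constructor
  · intro hC0
    -- C = 0 : derive orthogonality
    have eA : Aᵀ * A = 1 := by simpa [hC0] using e11
    have eAB : Aᵀ * B = 0 := by simpa [hC0] using e12
    have hAAt : A * Aᵀ = 1 := mul_eq_one_comm.mp eA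
    have hB0 : B = 0 := by
      calc B = (A * Aᵀ) * B := by rw [hAAt, Matrix.one_mul]
        _ = A * (Aᵀ * B) := by rw [Matrix.mul_assoc]
        _ = 0 := by rw [eAB, Matrix.mul_zero]
    have eD : Dᵀ * D = 1 := by
      have := e22
      rw [hB0] at this
      simp only [Matrix.transpose_zero, Matrix.mul_zero, Matrix.zero_mul, zero_sub,
        neg_eq_iff_eq_neg, neg_neg] at this
      simpa using this
    have hgtg : gᵀ * g = 1 := by
      rw [hgdec, hC0, hB0]
      simp [Matrix.fromBlocks_transpose, Matrix.fromBlocks_multiply, eA, eD,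
        ← Matrix.fromBlocks_one]
    exact (Matrix.inv_eq_left_inv hgtg).symm
  · intro hinv
    have hgtg : gᵀ * g = 1 := by rw [hinv]; exact Matrix.nonsing_inv_mul g hg
    have h3 : Matrix.fromBlocks (Aᵀ * A + Cᵀ * C) (Aᵀ * B + Cᵀ * D)
        (Bᵀ * A + Dᵀ * C) (Bᵀ * B + Dᵀ * D) = (1 : Matrix _ _ ℝ) := by
      rw [← hgtg, hgdec]
      simp [Matrix.fromBlocks_transpose, Matrix.fromBlocks_multiply]
    have f11 : Aᵀ * A + Cᵀ * C = 1 := by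
      have := congrArg Matrix.toBlocks₁₁ h3
      simpa [← Matrix.fromBlocks_one] using this
    have hCC : Cᵀ * C = 0 := by
      have := sub_eq_zero.mpr (f11.trans e11.symm)
      have h2CC : (2 : ℝ) • (Cᵀ * C) = 0 := by
        rw [two_smul]
        linear_combination (norm := abel) this
      simpa using (smul_eq_zero.mp h2CC).resolve_left (by norm_num)
    have : Cᴴ * C = 0 := by simpa using hCC
    exact Matrix.conjTranspose_mul_self_eq_zero.mp this
end

section
/- Let J = [[0,0,I_n],[0,I_r,0],[I_n,0,0]], let G ∈ Sym⁺_{2n+r}(ℝ) satisfy JGJ = G⁻¹, and write G = [[h, *, *],[G₂, *, *],[G₃, *, *]] in block columns. Define W = [[0],[0],[I_n]], U = [[G₃ - I_n],[G₂],[h]], Γ = WᵀU = h, and Δ = (UΓ⁻¹)ᵀ·(-J)·(UΓ⁻¹) where -J = -[[0,0,I_n],[0,I_r,0],[I_n,0,0]]. Then Δ = 2h⁻¹. In particular, the constraint from JGJ = G⁻¹ gives hG₃ + G₃ᵀh + G₂ᵀG₂ = 0. -/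
/-!
Since `G` is symmetric, `J² = 1` and `JGJ = G⁻¹` give `GᵀJG = J`. Hence the first block column
`C = [h; G₂; G₃]` of `G` is `J`-isotropic: `CᵀJC` is the top-left block of `GᵀJG = J`, which is `0`.
Expanding `CᵀJC` yields `hG₃ + G₃ᵀh + G₂ᵀG₂ = 0`. Expanding `UᵀJU` in the same way gives that
expression minus `2h`, so `Uᵀ(-J)U = 2h`, and conjugating by `h⁻¹` (`h` is positive definite as a
principal block of `G`) gives `Δ = 2h⁻¹`.
-/

open Matrix

namespace Matrix

variable {R m k n : Type*} [DecidableEq m] [DecidableEq k]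

def exchangeForm (R : Type*) [Zero R] [One R] (m k : Type*) [DecidableEq m] [DecidableEq k] :
    Matrix (m ⊕ (k ⊕ m)) (m ⊕ (k ⊕ m)) R :=
  fromBlocks 0 (fromCols 0 1) (fromRows 0 1) (fromBlocks 1 0 0 0)

theorem exchangeForm_submatrix_inl_inl [Zero R] [One R] :
    (exchangeForm R m k).submatrix Sum.inl Sum.inl = 0 := by
  ext; simp [exchangeForm]

variable [Fintype m] [Fintype k]

theorem exchangeForm_mul_self [Semiring R] : exchangeForm R m k * exchangeForm R m k = 1 := by
  ext (i | i | i) (j | j | j) <;> simp [exchangeForm, mul_apply, one_apply]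

theorem fromRows_transpose_mul_exchangeForm_mul_fromRows [Semiring R]
    (a c : Matrix m n R) (b : Matrix k n R) :
    (fromRows a (fromRows b c))ᵀ * exchangeForm R m k * fromRows a (fromRows b c) =
      aᵀ * c + bᵀ * b + cᵀ * a := by
  simp only [exchangeForm, transpose_fromRows, fromCols_mul_fromBlocks, mul_fromCols,
    Matrix.add_mul, fromCols_mul_fromRows, Matrix.zero_mul, Matrix.mul_zero, Matrix.mul_one,
    zero_add, add_zero]
  abel

theorem transpose_submatrix_mul_mul_submatrix {l o p : Type*} [Fintype l] [Semiring R]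
    (A : Matrix l o R) (M : Matrix l l R) (e : p → o) :
    (A.submatrix id e)ᵀ * M * A.submatrix id e = (Aᵀ * M * A).submatrix e e := by
  ext; simp [mul_apply]

theorem mul_mul_self_eq_of_mul_mul_eq_nonsing_inv [Fintype n] [DecidableEq n] [CommRing R]
    {J G : Matrix n n R} (hJ : J * J = 1) (hG : IsUnit G.det) (hGJ : J * G * J = G⁻¹) :
    G * J * G = J :=
  calc G * J * G = G * (J * G * J) * J := by simp only [Matrix.mul_assoc, hJ, Matrix.mul_one]
    _ = J := by rw [hGJ, mul_nonsing_inv G hG, Matrix.one_mul]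

end Matrix

theorem stmt13_general (n r : ℕ)
    (J G : Matrix (Fin n ⊕ (Fin r ⊕ Fin n)) (Fin n ⊕ (Fin r ⊕ Fin n)) ℝ)
    (hJ : J = Matrix.fromBlocks 0 (Matrix.fromCols 0 1) (Matrix.fromRows 0 1)
      (Matrix.fromBlocks 1 0 0 0))
    (hG : G.PosDef) (hGJ : J * G * J = G⁻¹)
    (h G₃ : Matrix (Fin n) (Fin n) ℝ) (G₂ : Matrix (Fin r) (Fin n) ℝ)
    (hhdef : h = Matrix.of fun i j => G (Sum.inl i) (Sum.inl j))
    (hG₂ : G₂ = Matrix.of fun i j => G (Sum.inr (Sum.inl i)) (Sum.inl j))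
    (hG₃ : G₃ = Matrix.of fun i j => G (Sum.inr (Sum.inr i)) (Sum.inl j))
    (U : Matrix (Fin n ⊕ (Fin r ⊕ Fin n)) (Fin n) ℝ)
    (hU : U = Matrix.fromRows (G₃ - 1) (Matrix.fromRows G₂ h)) :
    (U * h⁻¹)ᵀ * (-J) * (U * h⁻¹) = (2 : ℝ) • h⁻¹ ∧
      h * G₃ + G₃ᵀ * h + G₂ᵀ * G₂ = 0 := by
  change J = exchangeForm ℝ (Fin n) (Fin r) at hJ
  have hGsymm : Gᵀ = G := hG.isHermitian
  have hGJG : Gᵀ * J * G = J := by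
    rw [hGsymm]
    exact mul_mul_self_eq_of_mul_mul_eq_nonsing_inv (hJ ▸ exchangeForm_mul_self)
      (isUnit_iff_isUnit_det G |>.mp hG.isUnit) hGJ
  have hPD : h.PosDef := hhdef ▸ hG.submatrix Sum.inl_injective
  have hsymm : hᵀ = h := hPD.isHermitian
  have hcol : fromRows h (fromRows G₂ G₃) = G.submatrix id Sum.inl := by
    ext (i | i | i) j <;> simp [hhdef, hG₂, hG₃]
  have key : h * G₃ + G₃ᵀ * h + G₂ᵀ * G₂ = 0 := by
    have hiso := transpose_submatrix_mul_mul_submatrix G J Sum.inl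
    rw [hGJG, hJ, exchangeForm_submatrix_inl_inl, ← hcol,
      fromRows_transpose_mul_exchangeForm_mul_fromRows, hsymm] at hiso
    rw [← hiso]; abel
  have hM : Uᵀ * (-J) * U = (2 : ℝ) • h := by
    rw [Matrix.mul_neg, Matrix.neg_mul, hU, hJ, fromRows_transpose_mul_exchangeForm_mul_fromRows,
      transpose_sub, transpose_one, hsymm, neg_eq_iff_eq_neg, ← sub_eq_zero]
    rw [← key, Matrix.sub_mul, Matrix.mul_sub, Matrix.one_mul, Matrix.mul_one, two_smul]
    abel
  refine ⟨?_, key⟩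
  have hinv : h⁻¹ * h = 1 := nonsing_inv_mul h ((isUnit_iff_isUnit_det h).mp hPD.isUnit)
  calc (U * h⁻¹)ᵀ * (-J) * (U * h⁻¹) = h⁻¹ * (Uᵀ * (-J) * U) * h⁻¹ := by
        rw [transpose_mul, transpose_nonsing_inv, hsymm]; simp only [Matrix.mul_assoc]
    _ = (2 : ℝ) • h⁻¹ := by rw [hM, Matrix.mul_smul, hinv, Matrix.smul_mul, Matrix.one_mul]

/-- for `G ∈ Sym⁺_{2n+r}(ℝ)` with `JGJ = G⁻¹`, writing `h, G₂, G₃` for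
the blocks of the first block column of `G`, setting `U = [[G₃ - I],[G₂],[h]]` and
`Δ = (U h⁻¹)ᵀ (-J) (U h⁻¹)`, one has `Δ = 2h⁻¹`; moreover the constraint gives
`hG₃ + G₃ᵀh + G₂ᵀG₂ = 0`. -/
theorem stmt13 (n r : ℕ)
    (J G : Matrix (Fin n ⊕ (Fin r ⊕ Fin n)) (Fin n ⊕ (Fin r ⊕ Fin n)) ℝ)
    (hJ : J = Matrix.fromBlocks 0 (Matrix.fromCols 0 1) (Matrix.fromRows 0 1)
      (Matrix.fromBlocks 1 0 0 0))
    (hG : G.PosDef) (hGsymm : Gᵀ = G) (hGJ : J * G * J = G⁻¹)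
    (h G₃ : Matrix (Fin n) (Fin n) ℝ) (G₂ : Matrix (Fin r) (Fin n) ℝ)
    (hhdef : h = Matrix.of fun i j => G (Sum.inl i) (Sum.inl j))
    (hG₂ : G₂ = Matrix.of fun i j => G (Sum.inr (Sum.inl i)) (Sum.inl j))
    (hG₃ : G₃ = Matrix.of fun i j => G (Sum.inr (Sum.inr i)) (Sum.inl j))
    (U : Matrix (Fin n ⊕ (Fin r ⊕ Fin n)) (Fin n) ℝ)
    (hU : U = Matrix.fromRows (G₃ - 1) (Matrix.fromRows G₂ h)) :
    (U * h⁻¹)ᵀ * (-J) * (U * h⁻¹) = (2 : ℝ) • h⁻¹ ∧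
      h * G₃ + G₃ᵀ * h + G₂ᵀ * G₂ = 0 :=
  stmt13_general n r J G hJ hG hGJ h G₃ G₂ hhdef hG₂ hG₃ U hU
end

section
/- Let B = [[0, Cᵀ],[C, 0]] be a symmetric (2n+r)×(2n+r) real matrix (blocks of sizes n and n+r) and suppose C has singular value decomposition C = P₂ [[0],[σ]] qᵀ with P₂ = [[p₁,p₃],[p₂,p]] ∈ O(n+r), q ∈ O(n), σ = diag(σ₁,...,σₙ). Set P = diag(q, P₂) (block sizes n, n+r). Then e^{sB} = P · [[ch(sσ), 0, sh(sσ)],[0, I_r, 0],[sh(sσ), 0, ch(sσ)]] · Pᵀ, where ch(sσ) = (e^{sσ}+e^{-sσ})/2 and sh(sσ) = (e^{sσ}-e^{-sσ})/2. -/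
/-!
The SVD gives `s • B = P K Pᵀ` with `K = [[0, 0, sσ], [0, 0, 0], [sσ, 0, 0]]`, and `P` is
orthogonal, so `exp (s • B) = P (exp K) Pᵀ`. For diagonal `c, e, t`, the matrix
`W = [[1, 0, 1], [0, 1, 0], [-1, 0, 1]]` intertwines `[[c, 0, t], [0, e, 0], [t, 0, c]]` with
`diag (c - t, e, c + t)`. Hence the exponential of such a matrix has the same shape, with
`c ∓ t` replaced by `exp (c ∓ t) = exp c * (cosh t ∓ sinh t)`.
-/

open Matrix

namespace Matrix

variable {m n R : Type*} [DecidableEq m] [DecidableEq n]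

/-- The block matrix `[[diag c, 0, diag t], [0, diag e, 0], [diag t, 0, diag c]]`. -/
def crossBlocks [Zero R] (c : n → R) (e : m → R) (t : n → R) :
    Matrix (n ⊕ (m ⊕ n)) (n ⊕ (m ⊕ n)) R :=
  fromBlocks (diagonal c) (fromCols 0 (diagonal t)) (fromRows 0 (diagonal t))
    (fromBlocks (diagonal e) 0 0 (diagonal c))

def crossBasis [Ring R] : Matrix (n ⊕ (m ⊕ n)) (n ⊕ (m ⊕ n)) R :=
  fromBlocks 1 (fromCols 0 1) (fromRows 0 (-1)) 1

theorem smul_crossBlocks [Semiring R] (a : R) (c : n → R) (e : m → R) (t : n → R) :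
    a • crossBlocks c e t = crossBlocks (a • c) (a • e) (a • t) := by
  ext (i | i | i) (j | j | j) <;> simp [crossBlocks, diagonal_apply]

theorem crossBlocks_zero_zero [Zero R] (t : n → R) :
    (crossBlocks 0 0 t : Matrix (n ⊕ (m ⊕ n)) _ R) =
      fromBlocks 0 (fromRows 0 (diagonal t))ᵀ (fromRows 0 (diagonal t)) 0 := by
  simp [crossBlocks, transpose_fromRows]

variable [Fintype m] [Fintype n]

theorem crossBlocks_mul_crossBasis [CommRing R] (c : n → R) (e : m → R) (t : n → R) :
    crossBlocks c e t * crossBasis =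
      crossBasis * diagonal (Sum.elim (c - t) (Sum.elim e (c + t))) := by
  ext (i | i | i) (j | j | j) <;>
    simp [crossBlocks, crossBasis, mul_apply, Fintype.sum_sum_type, diagonal_apply, one_apply] <;>
    split_ifs <;> simp_all <;> ring

theorem crossBasis_mul_transpose [Ring R] :
    (crossBasis : Matrix (n ⊕ (m ⊕ n)) _ R) * crossBasisᵀ =
      diagonal (Sum.elim 2 (Sum.elim 1 2)) := by
  ext (i | i | i) (j | j | j) <;>
    simp [crossBasis, mul_apply, Fintype.sum_sum_type, diagonal_apply, one_apply] <;>
    by_cases i = j <;> simp_all [one_add_one_eq_two, eq_comm]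

theorem isUnit_crossBasis [Field R] [NeZero (2 : R)] :
    IsUnit (crossBasis : Matrix (n ⊕ (m ⊕ n)) _ R) := by
  have h := congrArg det (crossBasis_mul_transpose (m := m) (n := n) (R := R))
  rw [det_mul, det_transpose, det_diagonal] at h
  rw [isUnit_iff_isUnit_det, isUnit_iff_ne_zero]
  intro h0
  simp [h0, Fintype.prod_sum_type, two_ne_zero] at h

theorem exp_semiconj {𝕜 : Type*} [RCLike 𝕜] {U A B : Matrix m m 𝕜} (h : U * A = B * U) :
    U * NormedSpace.exp A = NormedSpace.exp B * U :=
  open scoped Norms.Operator in SemiconjBy.exp_right h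

theorem exp_crossBlocks (c : n → ℝ) (e : m → ℝ) (t : n → ℝ) :
    NormedSpace.exp (crossBlocks c e t) =
      crossBlocks (fun i => Real.exp (c i) * Real.cosh (t i)) (fun j => Real.exp (e j))
        (fun i => Real.exp (c i) * Real.sinh (t i)) := by
  have h := exp_semiconj (crossBlocks_mul_crossBasis c e t).symm
  rw [exp_diagonal] at h
  refine isUnit_crossBasis.mul_left_inj.1 ?_
  rw [← h, crossBlocks_mul_crossBasis]
  congr 2
  ext (i | i | i)
  · simp [← Real.exp_eq_exp_ℝ, ← mul_sub, Real.cosh_sub_sinh, ← Real.exp_add, ← sub_eq_add_neg]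
  · simp [← Real.exp_eq_exp_ℝ]
  · simp [← Real.exp_eq_exp_ℝ, ← mul_add, Real.cosh_add_sinh, ← Real.exp_add]

theorem exp_conj_of_mul_transpose_eq_one {𝕜 : Type*} [RCLike 𝕜] {P : Matrix m m 𝕜}
    (hP : P * Pᵀ = 1) (A : Matrix m m 𝕜) :
    NormedSpace.exp (P * A * Pᵀ) = P * NormedSpace.exp A * Pᵀ := by
  rw [← inv_eq_right_inv hP,
    exp_conj P A ((isUnit_iff_isUnit_det P).2 (isUnit_det_of_right_inverse hP))]

theorem fromBlocks_diag_mul_antidiag_mul_transpose {p : Type*} [Fintype p] [CommRing R]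
    (U : Matrix n n R) (V : Matrix p p R) (S : Matrix p n R) :
    fromBlocks U 0 0 V * fromBlocks 0 Sᵀ S 0 * (fromBlocks U 0 0 V)ᵀ =
      fromBlocks 0 (V * S * Uᵀ)ᵀ (V * S * Uᵀ) 0 := by
  simp [fromBlocks_transpose, fromBlocks_multiply, Matrix.mul_assoc]

end Matrix

theorem stmt15_general (n r : ℕ)
    (C : Matrix (Fin r ⊕ Fin n) (Fin n) ℝ)
    (B : Matrix (Fin n ⊕ (Fin r ⊕ Fin n)) (Fin n ⊕ (Fin r ⊕ Fin n)) ℝ)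
    (hB : B = Matrix.fromBlocks 0 Cᵀ C 0)
    (P₂ : Matrix (Fin r ⊕ Fin n) (Fin r ⊕ Fin n) ℝ)
    (hP₂orth : P₂ᵀ * P₂ = 1 ∧ P₂ * P₂ᵀ = 1)
    (q : Matrix (Fin n) (Fin n) ℝ) (hqorth : qᵀ * q = 1 ∧ q * qᵀ = 1)
    (d : Fin n → ℝ)
    (hSVD : C = P₂ * Matrix.fromRows (0 : Matrix (Fin r) (Fin n) ℝ) (Matrix.diagonal d) * qᵀ)
    (P : Matrix (Fin n ⊕ (Fin r ⊕ Fin n)) (Fin n ⊕ (Fin r ⊕ Fin n)) ℝ)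
    (hP : P = Matrix.fromBlocks q 0 0 P₂) (s : ℝ) :
    NormedSpace.exp (s • B) =
      P * Matrix.fromBlocks
        (Matrix.diagonal fun i => (Real.exp (s * d i) + Real.exp (-(s * d i))) / 2)
        (Matrix.fromCols 0
          (Matrix.diagonal fun i => (Real.exp (s * d i) - Real.exp (-(s * d i))) / 2))
        (Matrix.fromRows 0
          (Matrix.diagonal fun i => (Real.exp (s * d i) - Real.exp (-(s * d i))) / 2))
        (Matrix.fromBlocks 1 0 0
          (Matrix.diagonal fun i => (Real.exp (s * d i) + Real.exp (-(s * d i))) / 2)) *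
      Pᵀ := by
  have hPPt : P * Pᵀ = 1 := by
    simp [hP, fromBlocks_transpose, fromBlocks_multiply, hqorth.2, hP₂orth.2]
  have hB' : B = P * crossBlocks 0 0 d * Pᵀ := by
    rw [hB, hSVD, hP, crossBlocks_zero_zero, fromBlocks_diag_mul_antidiag_mul_transpose]
  rw [hB', ← Matrix.smul_mul, ← Matrix.mul_smul, smul_crossBlocks, smul_zero, smul_zero,
    exp_conj_of_mul_transpose_eq_one hPPt, exp_crossBlocks]
  simp [crossBlocks, Real.cosh_eq, Real.sinh_eq]

/-- for `B = [[0,Cᵀ],[C,0]]` (block sizes `n`, `r+n`) with singular value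
decomposition `C = P₂ [[0],[σ]] qᵀ`, `P₂ = [[p₁,p₃],[p₂,p]] ∈ O(r+n)`, `q ∈ O(n)`,
`σ = diag(σᵢ)`, and `P = diag(q, P₂)`, one has
`e^{sB} = P [[ch(sσ),0,sh(sσ)],[0,I_r,0],[sh(sσ),0,ch(sσ)]] Pᵀ`, where
`ch(x) = (eˣ + e⁻ˣ)/2` and `sh(x) = (eˣ - e⁻ˣ)/2` are applied to the diagonal. -/
theorem stmt15 (n r : ℕ)
    (C : Matrix (Fin r ⊕ Fin n) (Fin n) ℝ)
    (B : Matrix (Fin n ⊕ (Fin r ⊕ Fin n)) (Fin n ⊕ (Fin r ⊕ Fin n)) ℝ)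
    (hB : B = Matrix.fromBlocks 0 Cᵀ C 0)
    (p₁ : Matrix (Fin r) (Fin r) ℝ) (p₃ : Matrix (Fin r) (Fin n) ℝ)
    (p₂ : Matrix (Fin n) (Fin r) ℝ) (p : Matrix (Fin n) (Fin n) ℝ)
    (P₂ : Matrix (Fin r ⊕ Fin n) (Fin r ⊕ Fin n) ℝ)
    (hP₂ : P₂ = Matrix.fromBlocks p₁ p₃ p₂ p)
    (hP₂orth : P₂ᵀ * P₂ = 1 ∧ P₂ * P₂ᵀ = 1)
    (q : Matrix (Fin n) (Fin n) ℝ) (hqorth : qᵀ * q = 1 ∧ q * qᵀ = 1)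
    (d : Fin n → ℝ)
    (hSVD : C = P₂ * Matrix.fromRows (0 : Matrix (Fin r) (Fin n) ℝ) (Matrix.diagonal d) * qᵀ)
    (P : Matrix (Fin n ⊕ (Fin r ⊕ Fin n)) (Fin n ⊕ (Fin r ⊕ Fin n)) ℝ)
    (hP : P = Matrix.fromBlocks q 0 0 P₂) (s : ℝ) :
    NormedSpace.exp (s • B) =
      P * Matrix.fromBlocks
        (Matrix.diagonal fun i => (Real.exp (s * d i) + Real.exp (-(s * d i))) / 2)
        (Matrix.fromCols 0
          (Matrix.diagonal fun i => (Real.exp (s * d i) - Real.exp (-(s * d i))) / 2))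
        (Matrix.fromRows 0
          (Matrix.diagonal fun i => (Real.exp (s * d i) - Real.exp (-(s * d i))) / 2))
        (Matrix.fromBlocks 1 0 0
          (Matrix.diagonal fun i => (Real.exp (s * d i) + Real.exp (-(s * d i))) / 2)) *
      Pᵀ :=
  stmt15_general n r C B hB P₂ hP₂orth q hqorth d hSVD P hP s
end

section
/- Let G(s) = N(s)A(s)N(s)ᵀ where N(s) = [[I_n, 0],[n₁(s), I_n]] with n₁(s) symmetric, and A(s) = diag(h(s), h(s)⁻¹) with h(s) symmetric positive definite, all differentiable in s. Then (1/2)tr((G'G⁻¹)²) = tr((h'h⁻¹)²) + tr(h·(n₁')ᵀ·h·n₁'). -/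
/-!
Write `G = N A Nᵀ`. The product rule gives `G' G⁻¹ = N Y N⁻¹` with
`Y = N⁻¹N' + A'A⁻¹ + A (N⁻¹N')ᵀ A⁻¹`, so `tr((G'G⁻¹)²) = tr(Y²)`. Here `N⁻¹N' = [[0, 0], [n₁', 0]]`
and, using `(h⁻¹)' = -h⁻¹ h' h⁻¹`, `Y = [[h'h⁻¹, h n₁'ᵀ h], [n₁', -h⁻¹h']]`, whose squared trace
is `2 tr((h'h⁻¹)²) + 2 tr(h n₁'ᵀ h n₁')`.
-/

open Matrix

open Filter Topology

variable {l m n o : Type*}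

def HasMatDerivAt (f : ℝ → Matrix m n ℝ) (f' : Matrix m n ℝ) (s : ℝ) : Prop :=
  ∀ i j, HasDerivAt (fun t => f t i j) (f' i j) s

theorem hasMatDerivAt_const (c : Matrix m n ℝ) (s : ℝ) : HasMatDerivAt (fun _ => c) 0 s :=
  fun i j => hasDerivAt_const s (c i j)

theorem hasMatDerivAt_matDeriv {f : ℝ → Matrix m n ℝ} {s : ℝ}
    (hf : ∀ i j, DifferentiableAt ℝ (fun t => f t i j) s) : HasMatDerivAt f (matDeriv f s) s :=
  fun i j => (hf i j).hasDerivAt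

theorem hasMatDerivAt_iff_tendsto_slope {f : ℝ → Matrix m n ℝ} {f' : Matrix m n ℝ} {s : ℝ} :
    HasMatDerivAt f f' s ↔ Tendsto (slope f s) (𝓝[≠] s) (𝓝 f') := by
  simp only [HasMatDerivAt, hasDerivAt_iff_tendsto_slope]
  exact (tendsto_pi_nhds.trans (forall_congr' fun i => tendsto_pi_nhds)).symm

namespace HasMatDerivAt

variable {f : ℝ → Matrix m n ℝ} {f' : Matrix m n ℝ} {s : ℝ}

theorem matDeriv_eq (hf : HasMatDerivAt f f' s) : matDeriv f s = f' := by
  ext i j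
  exact (hf i j).deriv

theorem continuousAt (hf : HasMatDerivAt f f' s) : ContinuousAt f s :=
  continuousAt_pi.2 fun i => continuousAt_pi.2 fun j => (hf i j).continuousAt

theorem transpose (hf : HasMatDerivAt f f' s) : HasMatDerivAt (fun t => (f t)ᵀ) f'ᵀ s :=
  fun i j => hf j i

theorem mul [Fintype n] {g : ℝ → Matrix n o ℝ} {g' : Matrix n o ℝ}
    (hf : HasMatDerivAt f f' s) (hg : HasMatDerivAt g g' s) :
    HasMatDerivAt (fun t => f t * g t) (f' * g s + f s * g') s := by
  intro i j
  simp only [mul_apply, Matrix.add_apply, ← Finset.sum_add_distrib]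
  exact HasDerivAt.fun_sum fun k _ => (hf i k).fun_mul (hg k j)

theorem fromBlocks {g : ℝ → Matrix m o ℝ} {g' : Matrix m o ℝ} {p : ℝ → Matrix l n ℝ}
    {p' : Matrix l n ℝ} {q : ℝ → Matrix l o ℝ} {q' : Matrix l o ℝ}
    (hf : HasMatDerivAt f f' s) (hg : HasMatDerivAt g g' s) (hp : HasMatDerivAt p p' s)
    (hq : HasMatDerivAt q q' s) :
    HasMatDerivAt (fun t => Matrix.fromBlocks (f t) (g t) (p t) (q t))
      (Matrix.fromBlocks f' g' p' q') s := by
  rintro (i | i) (j | j)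
  exacts [hf i j, hg i j, hp i j, hq i j]

theorem inv [Fintype n] [DecidableEq n] {f : ℝ → Matrix n n ℝ} {f' : Matrix n n ℝ}
    (hf : HasMatDerivAt f f' s) (hs : IsUnit (f s).det) :
    HasMatDerivAt (fun t => (f t)⁻¹) (-((f s)⁻¹ * f' * (f s)⁻¹)) s := by
  have hinv : ContinuousAt (fun t => (f t)⁻¹) s := by
    refine (continuousAt_matrix_inv (f s) ?_).comp hf.continuousAt
    rw [Ring.inverse_eq_inv']
    exact continuousAt_inv₀ hs.ne_zero
  have hdet : ContinuousAt (fun t => (f t).det) s :=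
    continuous_id.matrix_det.continuousAt.comp hf.continuousAt
  have hunit : ∀ᶠ t in 𝓝[≠] s, IsUnit (f t).det :=
    nhdsWithin_le_nhds <| (hdet.eventually_ne hs.ne_zero).mono fun t ht => ht.isUnit
  rw [hasMatDerivAt_iff_tendsto_slope] at hf ⊢
  -- `A⁻¹ - B⁻¹ = -A⁻¹ (A - B) B⁻¹` for invertible `A` and `B`
  have hslope : slope (fun t => (f t)⁻¹) s =ᶠ[𝓝[≠] s]
      fun t => -((f t)⁻¹ * slope f s t * (f s)⁻¹) := by
    filter_upwards [hunit] with t ht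
    rw [slope_def_module, slope_def_module, Matrix.mul_smul, Matrix.smul_mul, ← smul_neg, mul_sub,
      sub_mul, nonsing_inv_mul _ ht, mul_nonsing_inv_cancel_right _ _ hs, one_mul, neg_sub]
  exact Tendsto.congr' hslope.symm
    (((hinv.tendsto.mono_left nhdsWithin_le_nhds).mul hf).mul tendsto_const_nhds).neg

end HasMatDerivAt

namespace Matrix

variable [Fintype m] [Fintype n]

theorem trace_fromBlocks {R : Type*} [AddCommMonoid R] (A : Matrix m m R) (B : Matrix m n R)
    (C : Matrix n m R) (D : Matrix n n R) : (fromBlocks A B C D).trace = A.trace + D.trace := by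
  simp [trace, Fintype.sum_sum_type]

variable {R : Type*} [CommRing R]

theorem trace_fromBlocks_mul_self (A : Matrix m m R) (B : Matrix m n R) (C : Matrix n m R)
    (D : Matrix n n R) :
    (fromBlocks A B C D * fromBlocks A B C D).trace =
      (A * A).trace + 2 * (B * C).trace + (D * D).trace := by
  rw [fromBlocks_multiply, trace_fromBlocks, trace_add, trace_add, trace_mul_comm C B]
  ring

theorem congr_deriv_mul_inv_eq_conj [DecidableEq n] (N A N' A' : Matrix n n R) (hN : IsUnit N.det)
    (hA : IsUnit A.det) :
    ((N' * A + N * A') * Nᵀ + N * A * N'ᵀ) * (N * A * Nᵀ)⁻¹ =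
      N * (N⁻¹ * N' + A' * A⁻¹ + A * (N⁻¹ * N')ᵀ * A⁻¹) * N⁻¹ := by
  have hNt : IsUnit Nᵀ.det := by rwa [det_transpose]
  rw [mul_inv_rev, mul_inv_rev, transpose_mul, transpose_nonsing_inv]
  simp only [add_mul, mul_add, Matrix.mul_assoc, mul_nonsing_inv_cancel_left _ _ hNt,
    mul_nonsing_inv_cancel_left _ _ hA, mul_nonsing_inv_cancel_left _ _ hN]

theorem trace_conj_mul_self [DecidableEq n] {N : Matrix n n R} (hN : IsUnit N.det)
    (Y : Matrix n n R) : (N * Y * N⁻¹ * (N * Y * N⁻¹)).trace = (Y * Y).trace := by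
  have hsq : N * Y * N⁻¹ * (N * Y * N⁻¹) = N * (Y * Y) * N⁻¹ := by
    simp only [Matrix.mul_assoc, nonsing_inv_mul_cancel_left _ _ hN]
  rw [hsq, trace_conj ((isUnit_iff_isUnit_det N).2 hN)]

theorem trace_sq_deriv_mul_inv_of_fromBlocks {G G' : Matrix (n ⊕ n) (n ⊕ n) R}
    [DecidableEq n] (H H' K K' : Matrix n n R) (hH : IsUnit H.det)
    (hG : G = fromBlocks 1 0 K 1 * fromBlocks H 0 0 H⁻¹ * (fromBlocks 1 0 K 1)ᵀ)
    (hG' : G' = (fromBlocks 0 0 K' 0 * fromBlocks H 0 0 H⁻¹ +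
        fromBlocks 1 0 K 1 * fromBlocks H' 0 0 (-(H⁻¹ * H' * H⁻¹))) * (fromBlocks 1 0 K 1)ᵀ +
      fromBlocks 1 0 K 1 * fromBlocks H 0 0 H⁻¹ * (fromBlocks 0 0 K' 0)ᵀ) :
    (G' * G⁻¹ * (G' * G⁻¹)).trace =
      2 * (H' * H⁻¹ * (H' * H⁻¹)).trace + 2 * (H * K'ᵀ * H * K').trace := by
  have hNdet : IsUnit (fromBlocks 1 0 K 1 : Matrix (n ⊕ n) (n ⊕ n) R).det := by simp
  have hAdet : IsUnit (fromBlocks H 0 0 H⁻¹).det := by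
    simpa [det_fromBlocks_zero₁₂, det_nonsing_inv] using hH
  have hNinv : (fromBlocks 1 0 K 1 : Matrix (n ⊕ n) (n ⊕ n) R)⁻¹ = fromBlocks 1 0 (-K) 1 := by
    simp [inv_fromBlocks_zero₁₂_of_isUnit_iff]
  have hAinv : (fromBlocks H 0 0 H⁻¹)⁻¹ = fromBlocks H⁻¹ 0 0 H := by
    rw [inv_fromBlocks_zero₁₂_of_isUnit_iff _ _ _ (by simp [isUnit_nonsing_inv_iff]),
      nonsing_inv_nonsing_inv _ hH]
    simp
  have hY : (fromBlocks 1 0 K 1 : Matrix (n ⊕ n) (n ⊕ n) R)⁻¹ * fromBlocks 0 0 K' 0 +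
      fromBlocks H' 0 0 (-(H⁻¹ * H' * H⁻¹)) * (fromBlocks H 0 0 H⁻¹)⁻¹ +
      fromBlocks H 0 0 H⁻¹ * ((fromBlocks 1 0 K 1)⁻¹ * fromBlocks 0 0 K' 0)ᵀ *
        (fromBlocks H 0 0 H⁻¹)⁻¹ =
      fromBlocks (H' * H⁻¹) (H * K'ᵀ * H) K' (-(H⁻¹ * H')) := by
    rw [hNinv, hAinv]
    simp [fromBlocks_multiply, fromBlocks_transpose, fromBlocks_add, Matrix.mul_assoc,
      nonsing_inv_mul _ hH]
  have hcycle : (-(H⁻¹ * H') * -(H⁻¹ * H')).trace = (H' * H⁻¹ * (H' * H⁻¹)).trace := by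
    rw [neg_mul_neg, Matrix.mul_assoc, trace_mul_comm]
    simp only [Matrix.mul_assoc]
  rw [hG', hG, congr_deriv_mul_inv_eq_conj _ _ _ _ hNdet hAdet, trace_conj_mul_self hNdet, hY,
    trace_fromBlocks_mul_self, hcycle]
  ring

end Matrix

theorem stmt18_general (n : ℕ)
    (h n₁ : ℝ → Matrix (Fin n) (Fin n) ℝ)
    (hdiff : ∀ i j, Differentiable ℝ fun s => h s i j)
    (n₁diff : ∀ i j, Differentiable ℝ fun s => n₁ s i j)
    (hpos : ∀ s, (h s).PosDef)
    (G : ℝ → Matrix (Fin n ⊕ Fin n) (Fin n ⊕ Fin n) ℝ)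
    (hG : ∀ s, G s = Matrix.fromBlocks 1 0 (n₁ s) 1 *
      Matrix.fromBlocks (h s) 0 0 (h s)⁻¹ * (Matrix.fromBlocks 1 0 (n₁ s) 1)ᵀ)
    (s : ℝ) :
    (1 / 2 : ℝ) * (matDeriv G s * (G s)⁻¹ * (matDeriv G s * (G s)⁻¹)).trace =
      (matDeriv h s * (h s)⁻¹ * (matDeriv h s * (h s)⁻¹)).trace +
      (h s * (matDeriv n₁ s)ᵀ * h s * matDeriv n₁ s).trace := by
  have hH : IsUnit (h s).det := (hpos s).det_pos.ne'.isUnit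
  have hh : HasMatDerivAt h (matDeriv h s) s := hasMatDerivAt_matDeriv fun i j => hdiff i j s
  have hN : HasMatDerivAt
      (fun t => fromBlocks 1 0 (n₁ t) 1 : ℝ → Matrix (Fin n ⊕ Fin n) (Fin n ⊕ Fin n) ℝ)
      (fromBlocks 0 0 (matDeriv n₁ s) 0) s :=
    (hasMatDerivAt_const _ s).fromBlocks (hasMatDerivAt_const _ s)
      (hasMatDerivAt_matDeriv fun i j => n₁diff i j s) (hasMatDerivAt_const _ s)
  have hA : HasMatDerivAt (fun t => fromBlocks (h t) 0 0 (h t)⁻¹)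
      (fromBlocks (matDeriv h s) 0 0 (-((h s)⁻¹ * matDeriv h s * (h s)⁻¹))) s :=
    hh.fromBlocks (hasMatDerivAt_const _ s) (hasMatDerivAt_const _ s) (hh.inv hH)
  have hG' := (funext hG ▸ (hN.mul hA).mul hN.transpose).matDeriv_eq
  rw [trace_sq_deriv_mul_inv_of_fromBlocks _ _ _ _ hH (hG s) hG']
  ring

/-- for `G = N A Nᵀ` with `N = [[I,0],[n₁,I]]`, `n₁` symmetric, and
`A = diag(h, h⁻¹)`, `h` symmetric positive definite, all differentiable in `s`, one has
`(1/2)tr((G'G⁻¹)²) = tr((h'h⁻¹)²) + tr(h (n₁')ᵀ h n₁')`. -/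
theorem stmt18 (n : ℕ)
    (h n₁ : ℝ → Matrix (Fin n) (Fin n) ℝ)
    (hdiff : ∀ i j, Differentiable ℝ fun s => h s i j)
    (n₁diff : ∀ i j, Differentiable ℝ fun s => n₁ s i j)
    (hpos : ∀ s, (h s).PosDef) (hsymm : ∀ s, (h s)ᵀ = h s)
    (n₁symm : ∀ s, (n₁ s)ᵀ = n₁ s)
    (G : ℝ → Matrix (Fin n ⊕ Fin n) (Fin n ⊕ Fin n) ℝ)
    (hG : ∀ s, G s = Matrix.fromBlocks 1 0 (n₁ s) 1 *
      Matrix.fromBlocks (h s) 0 0 (h s)⁻¹ * (Matrix.fromBlocks 1 0 (n₁ s) 1)ᵀ)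
    (s : ℝ) :
    (1 / 2 : ℝ) * (matDeriv G s * (G s)⁻¹ * (matDeriv G s * (G s)⁻¹)).trace =
      (matDeriv h s * (h s)⁻¹ * (matDeriv h s * (h s)⁻¹)).trace +
      (h s * (matDeriv n₁ s)ᵀ * h s * matDeriv n₁ s).trace :=
  stmt18_general n h n₁ hdiff n₁diff hpos G hG s
end
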